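/- arXiv:math/0207115 — 5 statements merged into one kernel-verified Lean document; each statement's English description precedes it below -/
import Mathlib

section
/- Let λ be a partition of l ≥ 1, with row tableau Λ^r and column tableau Λ^c. Then there exist invertible elements p and q of the group algebra ℂS_l such that p_{Λ^r} q_{Λ^r} p_{Λ^r} = p_{Λ^r} q_{Λ^r} p and q_{Λ^c} p_{Λ^c} q_{Λ^c} = q_{Λ^c} p_{Λ^c} q. -/
open scoped BigOperators
open scoped Classical
open Matrix

noncomputable section

/-! ### The group algebra of the symmetric group -/

/-- The group algebra `ℂ S_l` of the symmetric group of `{1,…,l}`. -/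
abbrev GA (l : ℕ) : Type := MonoidAlgebra ℂ (Equiv.Perm (Fin l))

/-- The transposition `(i j)`, as an element of the group algebra over `R`. -/
def swapElt (R : Type) [CommSemiring R] {l : ℕ} (i j : Fin l) :
    MonoidAlgebra R (Equiv.Perm (Fin l)) :=
  MonoidAlgebra.of R (Equiv.Perm (Fin l)) (Equiv.swap i j)

/-! ### Partitions and standard tableaux -/

/-- A partition: an antitone sequence of parts (0-based indexing),
with finitely many nonzero parts. -/
def IsPartitionFun (lam : ℕ → ℕ) : Prop :=
  Antitone lam ∧ ∃ r, ∀ i, r ≤ i → lam i = 0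

/-- A partition of `l` (0-based indexing of the parts). -/
def IsPartitionOf (l : ℕ) (lam : ℕ → ℕ) : Prop :=
  Antitone lam ∧ lam l = 0 ∧ ∑ i ∈ Finset.range l, lam i = l

/-- `conjP lam j` is the 1-based conjugate part `λ'_{j+1}`, i.e. the length
of the `(j+1)`-st column of the Young diagram of `λ`. -/
def conjP (lam : ℕ → ℕ) (j : ℕ) : ℕ := Nat.card {i : ℕ // j < lam i}

/-- A standard tableau of skew shape `λ/μ` with `n` boxes, in 0-based matrix
coordinates.  `pos k` is the box (row, column) containing the entry `k+1`;
entries increase left to right along rows and top to bottom along columns.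
Taking `μ = 0` gives standard tableaux of the straight shape `λ`. -/
structure SkewStdTableau (n : ℕ) (mu lam : ℕ → ℕ) where
  pos : Fin n → ℕ × ℕ
  mem_lower : ∀ k, mu (pos k).1 ≤ (pos k).2
  mem_upper : ∀ k, (pos k).2 < lam (pos k).1
  inj : Function.Injective pos
  surj : ∀ i j : ℕ, mu i ≤ j → j < lam i → ∃ k, pos k = (i, j)
  row_lt : ∀ k m : Fin n, (pos k).1 = (pos m).1 → (pos k).2 < (pos m).2 → k < m
  col_lt : ∀ k m : Fin n, (pos k).2 = (pos m).2 → (pos k).1 < (pos m).1 → k < m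

namespace SkewStdTableau

variable {n : ℕ} {mu lam : ℕ → ℕ}

/-- The content `j - i` of the box containing the entry `k+1`. -/
def content (T : SkewStdTableau n mu lam) (k : Fin n) : ℤ :=
  ((T.pos k).2 : ℤ) - ((T.pos k).1 : ℤ)

/-- `T` is the row tableau: the entries are ordered by rows, left to right
within each row. -/
def IsRowTableau (T : SkewStdTableau n mu lam) : Prop :=
  ∀ k m : Fin n, k < m ↔
    ((T.pos k).1 < (T.pos m).1 ∨ ((T.pos k).1 = (T.pos m).1 ∧ (T.pos k).2 < (T.pos m).2))

/-- `T` is the column tableau: the entries are ordered by columns. -/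
def IsColTableau (T : SkewStdTableau n mu lam) : Prop :=
  ∀ k m : Fin n, k < m ↔
    ((T.pos k).2 < (T.pos m).2 ∨ ((T.pos k).2 = (T.pos m).2 ∧ (T.pos k).1 < (T.pos m).1))

/-- `p_Λ`: the sum of all permutations preserving each row of `Λ`. -/
def pElt (T : SkewStdTableau n mu lam) : GA n :=
  ∑ s : Equiv.Perm (Fin n),
    if ∀ k, (T.pos (s k)).1 = (T.pos k).1 then MonoidAlgebra.of ℂ _ s else 0

/-- `q_Λ`: the signed sum of all permutations preserving each column of `Λ`. -/
def qElt (T : SkewStdTableau n mu lam) : GA n :=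
  ∑ s : Equiv.Perm (Fin n),
    if ∀ k, (T.pos (s k)).2 = (T.pos k).2
    then ((Equiv.Perm.sign s : ℤ) : ℂ) • MonoidAlgebra.of ℂ _ s else 0

end SkewStdTableau

/-! ### Ordered products over lexicographically ordered pairs -/

/-- The list of all pairs `(i,j)` with `i < j`, in lexicographic order. -/
def lexPairs (n : ℕ) : List (Fin n × Fin n) :=
  ((List.finRange n).product (List.finRange n)).filter (fun p => p.1 < p.2)

/-! ### Rational functions: the field of fractions of a polynomial ring -/

/-- The field of rational functions in countably many variables over `ℂ`. -/
abbrev KK : Type := FractionRing (MvPolynomial ℕ ℂ)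

/-- The canonical map from polynomials to rational functions. -/
def toKK : MvPolynomial ℕ ℂ →+* KK := algebraMap (MvPolynomial ℕ ℂ) KK

/-- The rational function `g` is regular at the point `x`, with value `v` there:
`g = p/q` with `q(x) ≠ 0` and `p(x)/q(x) = v`. -/
def RegularAtVal (g : KK) (x : ℕ → ℂ) (v : ℂ) : Prop :=
  ∃ p q : MvPolynomial ℕ ℂ,
    g * toKK q = toKK p ∧ MvPolynomial.eval x q ≠ 0 ∧
      MvPolynomial.eval x p = v * MvPolynomial.eval x q

/-- The group algebra of `S_l` with coefficients in the field `KK`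
of rational functions. -/
abbrev GAK (l : ℕ) : Type := MonoidAlgebra KK (Equiv.Perm (Fin l))

/-- A `ℂ S_l`-valued rational function is regular at a point with a given value
iff all its coefficient rational functions are. -/
def GARegularAtVal {l : ℕ} (F : GAK l) (x : ℕ → ℂ) (v : GA l) : Prop :=
  ∀ s : Equiv.Perm (Fin l), RegularAtVal (F.coeff s) x (v.coeff s)

/-- The factor `1 - (i j)/(c_i - c_j + t_i - t_j)` of the fusion procedure,
where the variable `t_k` is the polynomial variable `X (var k)` (so that the
constraints `t_k = t_m` for `var k = var m` are built in). -/
def fusionFactor {l : ℕ} (c : Fin l → ℤ) (var : Fin l → ℕ) (i j : Fin l) : GAK l :=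
  (1 : GAK l) -
    (toKK (MvPolynomial.C ((c i - c j : ℤ) : ℂ)
        + MvPolynomial.X (var i) - MvPolynomial.X (var j)))⁻¹ • swapElt KK i j

/-- The full ordered product `∏→_{1≤i<j≤l} (1 - (i j)/(c_i-c_j+t_i-t_j))`. -/
def fusionProd {l : ℕ} (c : Fin l → ℤ) (var : Fin l → ℕ) : GAK l :=
  ((lexPairs l).map (fun p => fusionFactor c var p.1 p.2)).prod

/-- The partial ordered product over the lexicographically ordered pairs
`(i,j)`, `i<j`, satisfying the predicate `P`. -/
def fusionProdOn {l : ℕ} (c : Fin l → ℤ) (var : Fin l → ℕ)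
    (P : Fin l × Fin l → Prop) : GAK l :=
  (((lexPairs l).filter (fun p => P p)).map (fun p => fusionFactor c var p.1 p.2)).prod

/-- The factor `1 - (i j)/(x - y)` of the fusion procedure, over `ℂ`. -/
def cFactor {l : ℕ} (i j : Fin l) (x y : ℂ) : GA l :=
  (1 : GA l) - (x - y)⁻¹ • swapElt ℂ i j

/-! ### Operators on tensor powers of ℂ^L, as matrices -/

/-- Index set of the standard basis of `(ℂ^L)^{⊗n}`. -/
abbrev TIdx (L n : ℕ) : Type := Fin n → Fin L

/-- Operators on `(ℂ^L)^{⊗n}` with entries in `R`, encoded as matrices. -/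
abbrev TOp (R : Type) (L n : ℕ) : Type := Matrix (TIdx L n) (TIdx L n) R

/-- The operator on `(ℂ^L)^{⊗n}` permuting the tensor factors according
to the permutation `s`. -/
def permMat {L n : ℕ} (s : Equiv.Perm (Fin n)) : TOp ℂ L n :=
  fun f g => if g = f ∘ s then 1 else 0

/-- The operator `P_{kl}` exchanging the `k`-th and `l`-th tensor factors. -/
def Pmat {L n : ℕ} (k l : Fin n) : TOp ℂ L n := permMat (Equiv.swap k l)

/-- The operator `Q_{kl}` acting as
`Q(L) : u ⊗ v ↦ ⟨u,v⟩ ∑_a u_a ⊗ v_a` in the `k`-th and `l`-th tensor factors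
(for the bilinear form with Gram matrix `B`, `⟨u,v⟩ = uᵀ B v`, and dual bases
`u_a, v_a`), and as the identity elsewhere. -/
def Qmat {L n : ℕ} (B : Matrix (Fin L) (Fin L) ℂ) (k l : Fin n) : TOp ℂ L n :=
  fun f g =>
    if ∀ i, i ≠ k → i ≠ l → g i = f i then B⁻¹ (f l) (f k) * B (g k) (g l) else 0

/-- The action of an element of the group algebra `ℂ S_l` on `(ℂ^L)^{⊗l}`,
by permutations of the tensor factors. -/
def gaMat (L : ℕ) {l : ℕ} (a : GA l) : TOp ℂ L l :=
  Finsupp.sum a.coeff (fun s c => c • permMat s)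

/-- The rational R-matrix `R_{kl}(x,y) = 1 - P_{kl}/(x-y)`. -/
def Rmat (L : ℕ) {n : ℕ} (k l : Fin n) (x y : ℂ) : TOp ℂ L n :=
  1 - (x - y)⁻¹ • Pmat k l

/-- `R̃_{kl}(x,y) = 1 + Q_{kl}/(x+y)`. -/
def Rtil {L : ℕ} (B : Matrix (Fin L) (Fin L) ℂ) {n : ℕ} (k l : Fin n) (x y : ℂ) :
    TOp ℂ L n :=
  1 + (x + y)⁻¹ • Qmat B k l

/-- `R̄_{kl}(x,y) = 1 - Q_{kl}/(x+y+L)`. -/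
def Rbar {L : ℕ} (B : Matrix (Fin L) (Fin L) ℂ) {n : ℕ} (k l : Fin n) (x y : ℂ) :
    TOp ℂ L n :=
  1 - (x + y + (L : ℂ))⁻¹ • Qmat B k l

/-- An operator-valued rational function is regular at a point with a given
value iff all its matrix entries are. -/
def MatRegularAtVal {L n : ℕ} (G : TOp KK L n) (x : ℕ → ℂ) (V : TOp ℂ L n) : Prop :=
  ∀ f g, RegularAtVal (G f g) x (V f g)

/-- The ordered product `∏→ (1 - P_{kl}/(c_k - c_l + t_k - t_l))` over all
lexicographically ordered pairs, with `t_k` the polynomial variable `X (var k)`. -/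
def fusionRK (L : ℕ) {n : ℕ} (c : Fin n → ℤ) (var : Fin n → ℕ) : TOp KK L n :=
  ((lexPairs n).map (fun p =>
    (1 : TOp KK L n) -
      (toKK (MvPolynomial.C ((c p.1 - c p.2 : ℤ) : ℂ)
          + MvPolynomial.X (var p.1) - MvPolynomial.X (var p.2)))⁻¹ •
        (Pmat p.1 p.2).map (algebraMap ℂ KK))).prod

/-- The ordered product `∏→ (1 - Q_{kl}/(c_k + c_l + t_k + t_l + a))` over all
lexicographically ordered pairs, with `t_k` the polynomial variable `X (var k)`. -/
def fusionQK {L : ℕ} (B : Matrix (Fin L) (Fin L) ℂ) {n : ℕ}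
    (c : Fin n → ℤ) (var : Fin n → ℕ) (a : ℂ) : TOp KK L n :=
  ((lexPairs n).map (fun p =>
    (1 : TOp KK L n) -
      (toKK (MvPolynomial.C (((c p.1 + c p.2 : ℤ) : ℂ) + a)
          + MvPolynomial.X (var p.1) + MvPolynomial.X (var p.2)))⁻¹ •
        (Qmat B p.1 p.2).map (algebraMap ℂ KK))).prod




/-- `θ_m`: the linear map on `ℂ S_l` keeping only the permutations which
preserve the subset `{1,…,m}` (0-based: `{0,…,m-1}`). -/
def theta (l m : ℕ) (a : GA l) : GA l :=
  ∑ s : Equiv.Perm (Fin l),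
    if ∀ k : Fin l, (k : ℕ) < m → ((s k : ℕ) < m)
    then MonoidAlgebra.single s (a.coeff s) else 0

/-- `γ_m`: the linear map on `ℂ S_{l+1}` keeping only the permutations `s`
with `s(1) ∉ {2,…,m+1}` (0-based: `s 0 ∉ {1,…,m}`). -/
def gammaMap (l m : ℕ) (a : GA (l + 1)) : GA (l + 1) :=
  ∑ s : Equiv.Perm (Fin (l + 1)),
    if (s 0 = 0 ∨ m < ((s 0 : Fin (l + 1)) : ℕ))
    then MonoidAlgebra.single s (a.coeff s) else 0

/-- `γ'_m`: the linear map on `ℂ S_{l+1}` keeping only the permutations `s`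
with `s⁻¹(1) ∉ {2,…,m+1}`. -/
def gammaMap' (l m : ℕ) (a : GA (l + 1)) : GA (l + 1) :=
  ∑ s : Equiv.Perm (Fin (l + 1)),
    if (s⁻¹ 0 = 0 ∨ m < ((s⁻¹ 0 : Fin (l + 1)) : ℕ))
    then MonoidAlgebra.single s (a.coeff s) else 0

/-- The embedding `S_l → S_{l+1}` induced by the shift `k ↦ k+1` of `{1,…,l}`
onto `{2,…,l+1}` (the new point `1` is fixed). -/
def shiftPerm {l : ℕ} (s : Equiv.Perm (Fin l)) : Equiv.Perm (Fin (l + 1)) :=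
  Equiv.permCongr (finCongr (Nat.add_comm 1 l))
    (Equiv.permCongr finSumFinEquiv (Equiv.sumCongr (Equiv.refl (Fin 1)) s))

/-- The embedding `ι_1 : ℂ S_l → ℂ S_{l+1}` induced by the shift `k ↦ k+1`. -/
def iota1 {l : ℕ} (a : GA l) : GA (l + 1) :=
  MonoidAlgebra.ofCoeff (Finsupp.mapDomain shiftPerm a.coeff)

/-- The permutation of `{1,…,n+1}` fixing `1` and reversing `2,…,n+1`. -/
def revPerm (n : ℕ) : Equiv.Perm (Fin (n + 1)) :=
  Function.Involutive.toPerm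
    (fun x => if h : (x : ℕ) = 0 then x
      else ⟨n + 1 - (x : ℕ), by have := x.isLt; omega⟩)
    (by
      intro x
      by_cases h : (x : ℕ) = 0
      · simp [h]
      · have hle : (x : ℕ) ≤ n := Nat.lt_succ_iff.mp x.isLt
        have h1 : 1 ≤ (x : ℕ) := Nat.one_le_iff_ne_zero.mpr h
        simp only [dif_neg h]
        have h2 : ((⟨n + 1 - (x : ℕ), by omega⟩ : Fin (n + 1)) : ℕ) ≠ 0 := by
          simp only []
          omega
        simp only [dif_neg h2]
        ext
        simp only []
        omega)

/-- Lexicographic strict order on pairs. -/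
def lexLT {l : ℕ} (p q : Fin l × Fin l) : Prop :=
  p.1 < q.1 ∨ (p.1 = q.1 ∧ p.2 < q.2)

/-- Lexicographic order on pairs. -/
def lexLE {l : ℕ} (p q : Fin l × Fin l) : Prop := lexLT p q ∨ p = q


/-- The operator `1 ⊗ F` on `(ℂ^L)^{⊗(l+1)}`, acting as `F` in the last `l`
tensor factors and as the identity in the first one. -/
def extMat {L l : ℕ} (F : TOp ℂ L l) : TOp ℂ L (l + 1) :=
  fun f g => if f 0 = g 0 then F (fun k => f k.succ) (fun k => g k.succ) else 0




lemma downclosed_eq_range (S : Finset ℕ) (h : ∀ x ∈ S, ∀ y, y ≤ x → y ∈ S) :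
    S = Finset.range S.card := by
  have key : ∀ x, x ∈ S ↔ x < S.card := by
    intro x
    constructor
    · intro hx
      have hsub : Finset.range (x + 1) ⊆ S := fun y hy =>
        h x hx y (Nat.lt_succ_iff.mp (Finset.mem_range.mp hy))
      have := Finset.card_le_card hsub
      simpa [Finset.card_range, Nat.succ_le_iff] using this
    · intro hx
      by_contra hxS
      have hsub : S ⊆ Finset.range x := by
        intro y hy
        rcases lt_or_ge y x with h' | h'
        · exact Finset.mem_range.mpr h'
        · exact absurd (h y hy x h') hxS
      have := Finset.card_le_card hsub
      simp only [Finset.card_range] at this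
      omega
  ext x
  rw [key, Finset.mem_range]

section KeyCount

variable {l : ℕ} {lam : ℕ → ℕ}

/-- `λ'_j`, as a filtered-range cardinality. -/
def colLen (l : ℕ) (lam : ℕ → ℕ) (j : ℕ) : ℕ :=
  ((Finset.range l).filter (fun i' => j < lam i')).card

lemma lt_l_of_lam_pos (hA : Antitone lam) (hl : lam l = 0) {i' j : ℕ} (h : j < lam i') :
    i' < l := by
  by_contra hc
  have := hA (le_of_not_gt hc)
  omega

lemma filter_lam_eq_range (hA : Antitone lam) (hl : lam l = 0) (j : ℕ) :
    (Finset.range l).filter (fun i' => j < lam i') = Finset.range (colLen l lam j) := by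
  apply downclosed_eq_range
  intro x hx y hy
  simp only [Finset.mem_filter, Finset.mem_range] at hx ⊢
  exact ⟨lt_of_le_of_lt hy hx.1, lt_of_lt_of_le hx.2 (hA hy)⟩

lemma Mcnt_eq (hA : Antitone lam) (hl : lam l = 0) (n j : ℕ) :
    ((Finset.range (n + 1)).filter (fun i' => j < lam i')).card
      = min (n + 1) (colLen l lam j) := by
  have hset : (Finset.range (n + 1)).filter (fun i' => j < lam i')
      = Finset.range (n + 1) ∩ ((Finset.range l).filter (fun i' => j < lam i')) := by
    ext x
    simp only [Finset.mem_filter, Finset.mem_inter, Finset.mem_range]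
    constructor
    · rintro ⟨h1, h2⟩; exact ⟨h1, lt_l_of_lam_pos hA hl h2, h2⟩
    · rintro ⟨h1, _, h2⟩; exact ⟨h1, h2⟩
  rw [hset, filter_lam_eq_range hA hl]
  have : Finset.range (n + 1) ∩ Finset.range (colLen l lam j)
      = Finset.range (min (n + 1) (colLen l lam j)) := by
    ext x; simp [Finset.mem_inter, Nat.lt_min]
  rw [this, Finset.card_range]

/-- The core counting lemma: if no two entries in the same row of `T` are in the
same column of `S`, then each entry's `S`-column is shorter than its `T`-row length. -/
lemma key_count (hA : Antitone lam) (hl : lam l = 0)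
    (pT pS : Fin l → ℕ × ℕ)
    (hTi : Function.Injective pT) (hSi : Function.Injective pS)
    (hTm : ∀ k, (pT k).2 < lam (pT k).1) (hSm : ∀ k, (pS k).2 < lam (pS k).1)
    (hTs : ∀ i j : ℕ, j < lam i → ∃ k, pT k = (i, j))
    (H : ∀ a b, a ≠ b → (pT a).1 = (pT b).1 → (pS a).2 ≠ (pS b).2) :
    ∀ k, (pS k).2 < lam (pT k).1 := by
  -- the fiber-count function
  set Nf : ℕ → ℕ → ℕ := fun n j =>
    (Finset.univ.filter (fun a : Fin l => (pT a).1 ≤ n ∧ (pS a).2 = j)).card with hNf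
  -- Bound 1
  have hN1 : ∀ n j, Nf n j ≤ n + 1 := by
    intro n j
    have : Nf n j ≤ (Finset.range (n + 1)).card := by
      apply Finset.card_le_card_of_injOn (fun a => (pT a).1)
      · intro a ha
        simp only [Finset.mem_coe, Finset.mem_filter] at ha
        exact Finset.mem_range.mpr (Nat.lt_succ_of_le ha.2.1)
      · intro a ha b hb hab
        simp only [Finset.coe_filter, Set.mem_setOf_eq] at ha hb
        by_contra hne
        exact H a b hne hab (ha.2.2.trans hb.2.2.symm)
    simpa [Finset.card_range] using this
  -- Bound 2
  have hN2 : ∀ n j, Nf n j ≤ colLen l lam j := by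
    intro n j
    apply Finset.card_le_card_of_injOn (fun a => (pS a).1)
    · intro a ha
      simp only [Finset.mem_coe, Finset.mem_filter] at ha
      simp only [Finset.mem_coe, Finset.mem_filter, Finset.mem_range]
      have h2 : j < lam (pS a).1 := ha.2.2 ▸ hSm a
      exact ⟨lt_l_of_lam_pos hA hl h2, h2⟩
    · intro a ha b hb hab
      simp only [Finset.coe_filter, Set.mem_setOf_eq] at ha hb
      apply hSi
      have := ha.2.2.trans hb.2.2.symm
      exact Prod.ext hab this
  -- fiber over a row has cardinality `lam i'`
  have hfiber : ∀ i' : ℕ,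
      (Finset.univ.filter (fun a : Fin l => (pT a).1 = i')).card = lam i' := by
    intro i'
    rw [← Finset.card_range (lam i')]
    refine Finset.card_bij' (fun a _ => (pT a).2)
      (fun j hj => Classical.choose (hTs i' j (Finset.mem_range.mp hj))) ?_ ?_ ?_ ?_
    · intro a ha
      simp only [Finset.mem_filter] at ha
      exact Finset.mem_range.mpr (ha.2 ▸ hTm a)
    · intro j hj
      have hspec := Classical.choose_spec (hTs i' j (Finset.mem_range.mp hj))
      simp only [Finset.mem_filter, Finset.mem_univ, true_and]
      rw [hspec]
    · intro a ha
      simp only [Finset.mem_filter, Finset.mem_univ, true_and] at ha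
      have hmem : (pT a).2 < lam i' := ha ▸ hTm a
      have hspec := Classical.choose_spec (hTs i' (pT a).2 hmem)
      apply hTi
      rw [hspec, ← ha]
    · intro j hj
      have hspec := Classical.choose_spec (hTs i' j (Finset.mem_range.mp hj))
      simp [hspec]
  -- total count, fibered by S-columns
  have hsumN : ∀ n, ∑ j ∈ Finset.range (lam 0), Nf n j
      = (Finset.univ.filter (fun a : Fin l => (pT a).1 ≤ n)).card := by
    intro n
    rw [Finset.card_eq_sum_card_fiberwise (f := fun a => (pS a).2)
      (t := Finset.range (lam 0)) ?_]
    · apply Finset.sum_congr rfl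
      intro j _
      rw [hNf]
      congr 1
      rw [Finset.filter_filter]
    · intro a ha
      exact Finset.mem_range.mpr (lt_of_lt_of_le (hSm a) (hA (Nat.zero_le _)))
  -- total count, fibered by T-rows
  have hsumT : ∀ n, (Finset.univ.filter (fun a : Fin l => (pT a).1 ≤ n)).card
      = ∑ i' ∈ Finset.range (n + 1), lam i' := by
    intro n
    rw [Finset.card_eq_sum_card_fiberwise (f := fun a => (pT a).1)
      (t := Finset.range (n + 1)) ?_]
    · apply Finset.sum_congr rfl
      intro i' hi'
      rw [← hfiber i']
      congr 1
      rw [Finset.filter_filter]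
      apply Finset.filter_congr
      intro a _
      simp only [Finset.mem_range] at hi'
      constructor
      · rintro ⟨_, h⟩; exact h
      · intro h; exact ⟨h ▸ Nat.lt_succ_iff.mp hi', h⟩
    · intro a ha
      simp only [Finset.mem_coe, Finset.mem_filter] at ha
      exact Finset.mem_range.mpr (Nat.lt_succ_of_le ha.2)
  -- the double-counting identity
  have hid : ∀ n, ∑ i' ∈ Finset.range (n + 1), lam i'
      = ∑ j ∈ Finset.range (lam 0), min (n + 1) (colLen l lam j) := by
    intro n
    have h1 : ∀ i' : ℕ, lam i'
        = ∑ j ∈ Finset.range (lam 0), if j < lam i' then 1 else 0 := by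
      intro i'
      rw [← Finset.card_filter]
      have : (Finset.range (lam 0)).filter (fun j => j < lam i')
          = Finset.range (lam i') := by
        ext j
        simp only [Finset.mem_filter, Finset.mem_range]
        have := hA (Nat.zero_le i')
        omega
      rw [this, Finset.card_range]
    calc ∑ i' ∈ Finset.range (n + 1), lam i'
        = ∑ i' ∈ Finset.range (n + 1), ∑ j ∈ Finset.range (lam 0),
            if j < lam i' then 1 else 0 := Finset.sum_congr rfl (fun i' _ => h1 i')
      _ = ∑ j ∈ Finset.range (lam 0), ∑ i' ∈ Finset.range (n + 1),
            if j < lam i' then 1 else 0 := Finset.sum_comm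
      _ = ∑ j ∈ Finset.range (lam 0), min (n + 1) (colLen l lam j) := by
          apply Finset.sum_congr rfl
          intro j _
          rw [← Finset.card_filter, Mcnt_eq hA hl]
  -- equality of counts everywhere
  have hNcap : ∀ n, ∀ j ∈ Finset.range (lam 0), Nf n j = min (n + 1) (colLen l lam j) := by
    intro n
    rw [← Finset.sum_eq_sum_iff_of_le (fun j _ => le_min (hN1 n j) (hN2 n j))]
    rw [hsumN n, hsumT n, hid n]
  -- final contradiction
  intro k
  by_contra hcon
  push_neg at hcon
  set i := (pT k).1 with hi
  set j := (pS k).2 with hj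
  have hjmem : j ∈ Finset.range (lam 0) :=
    Finset.mem_range.mpr (lt_of_lt_of_le (hSm k) (hA (Nat.zero_le _)))
  have hcolLen : colLen l lam j ≤ i := by
    have hsub : (Finset.range l).filter (fun i' => j < lam i') ⊆ Finset.range i := by
      intro i' hi'
      simp only [Finset.mem_filter, Finset.mem_range] at hi' ⊢
      by_contra hc
      have := hA (le_of_not_gt hc)
      omega
    simpa [colLen, Finset.card_range] using Finset.card_le_card hsub
  have hcolpos : 1 ≤ colLen l lam j := by
    have : (pS k).1 ∈ (Finset.range l).filter (fun i' => j < lam i') := by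
      simp only [Finset.mem_filter, Finset.mem_range]
      exact ⟨lt_l_of_lam_pos hA hl (hSm k), hSm k⟩
    exact Finset.card_pos.mpr ⟨_, this⟩
  have hipos : 1 ≤ i := le_trans hcolpos hcolLen
  obtain ⟨i0, hi0⟩ : ∃ i0, i = i0 + 1 := ⟨i - 1, by omega⟩
  have hNi : Nf i j = colLen l lam j := by
    rw [hNcap i j hjmem]; omega
  have hNi0 : Nf i0 j = colLen l lam j := by
    rw [hNcap i0 j hjmem]; omega
  have hss : (Finset.univ.filter (fun a : Fin l => (pT a).1 ≤ i0 ∧ (pS a).2 = j))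
      ⊂ (Finset.univ.filter (fun a : Fin l => (pT a).1 ≤ i ∧ (pS a).2 = j)) := by
    constructor
    · intro a ha
      simp only [Finset.mem_filter, Finset.mem_univ, true_and] at ha ⊢
      exact ⟨by omega, ha.2⟩
    · intro hsub
      have hk : k ∈ Finset.univ.filter (fun a : Fin l => (pT a).1 ≤ i ∧ (pS a).2 = j) := by
        exact Finset.mem_filter.mpr ⟨Finset.mem_univ k, le_refl _, rfl⟩
      have := hsub hk
      simp only [Finset.mem_filter, Finset.mem_univ, true_and] at this
      omega
  have := Finset.card_lt_card hss
  simp only [hNf] at hNi hNi0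
  omega

end KeyCount

/-- Decomposition lemma: if no two entries in the same row of `T` go, under `u`, to
the same column of `T`, then `u = c⁻¹ * r` with `r` row-preserving and `c`
column-preserving. -/
lemma decomp (hA : Antitone lam) (hl : lam l = 0)
    (pT : Fin l → ℕ × ℕ) (hTi : Function.Injective pT)
    (hTm : ∀ k, (pT k).2 < lam (pT k).1)
    (hTs : ∀ i j : ℕ, j < lam i → ∃ k, pT k = (i, j))
    (u : Equiv.Perm (Fin l))
    (H : ∀ a b, a ≠ b → (pT a).1 = (pT b).1 → (pT (u a)).2 ≠ (pT (u b)).2) :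
    ∃ r c : Equiv.Perm (Fin l),
      (∀ k, (pT (r k)).1 = (pT k).1) ∧ (∀ k, (pT (c k)).2 = (pT k).2) ∧ u = c⁻¹ * r := by
  have hkey := key_count hA hl pT (fun k => pT (u k)) hTi (hTi.comp u.injective)
    hTm (fun k => hTm (u k)) hTs H
  have hex : ∀ k, ∃ m, pT m = ((pT k).1, (pT (u k)).2) := fun k => hTs _ _ (hkey k)
  set g0 : Fin l → Fin l := fun k => u⁻¹ (Classical.choose (hex k)) with hg0
  have hg0spec : ∀ k, pT (u (g0 k)) = ((pT k).1, (pT (u k)).2) := by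
    intro k
    simp only [hg0, Equiv.Perm.coe_inv, Equiv.apply_symm_apply]
    exact Classical.choose_spec (hex k)
  have hginj : Function.Injective g0 := by
    intro a b hab
    have ha := hg0spec a
    have hb := hg0spec b
    rw [hab, hb] at ha
    by_contra hne
    exact H a b hne (congrArg Prod.fst ha).symm (congrArg Prod.snd ha).symm
  let γ : Equiv.Perm (Fin l) := Equiv.ofBijective g0 (Finite.injective_iff_bijective.mp hginj)
  have hγ : ∀ k, γ k = g0 k := fun k => rfl
  refine ⟨u * γ, u * γ * u⁻¹, ?_, ?_, ?_⟩
  · intro k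
    show (pT (u (γ k))).1 = (pT k).1
    rw [hγ, hg0spec k]
  · intro k
    show (pT (u (γ (u⁻¹ k)))).2 = (pT k).2
    rw [hγ, hg0spec (u⁻¹ k), Equiv.Perm.coe_inv, Equiv.apply_symm_apply]
  · group




section Alg

variable {l : ℕ}

/-- sign as a complex number -/
def sgnC (s : Equiv.Perm (Fin l)) : ℂ := ((Equiv.Perm.sign s : ℤ) : ℂ)

lemma sgnC_mul (s t : Equiv.Perm (Fin l)) : sgnC (s * t) = sgnC s * sgnC t := by
  simp [sgnC]

lemma sgnC_sq (s : Equiv.Perm (Fin l)) : sgnC s * sgnC s = 1 := by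
  have := Int.units_mul_self (Equiv.Perm.sign s)
  simp only [sgnC]
  rw [← Int.cast_mul]
  norm_cast
  rw [this]
  rfl

lemma sgnC_one : sgnC (1 : Equiv.Perm (Fin l)) = 1 := by simp [sgnC]

lemma sgnC_ne_zero (s : Equiv.Perm (Fin l)) : sgnC s ≠ 0 := by
  intro h
  have := sgnC_sq s
  rw [h] at this
  simp at this

lemma sgnC_swap {a b : Fin l} (h : a ≠ b) : sgnC (Equiv.swap a b) = -1 := by
  simp [sgnC, Equiv.Perm.sign_swap h]

end Alg

section TabAlg

variable {l : ℕ} {lam : ℕ → ℕ}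

namespace SkewStdTableau

variable (T : SkewStdTableau l (fun _ => 0) lam)

/-- The row group of `T`, as a finset of permutations. -/
def RTf : Finset (Equiv.Perm (Fin l)) :=
  Finset.univ.filter (fun s => ∀ k, (T.pos (s k)).1 = (T.pos k).1)

/-- The column group of `T`, as a finset of permutations. -/
def CTf : Finset (Equiv.Perm (Fin l)) :=
  Finset.univ.filter (fun s => ∀ k, (T.pos (s k)).2 = (T.pos k).2)

lemma mem_RTf {s : Equiv.Perm (Fin l)} :
    s ∈ T.RTf ↔ ∀ k, (T.pos (s k)).1 = (T.pos k).1 := by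
  simp [RTf]

lemma mem_CTf {s : Equiv.Perm (Fin l)} :
    s ∈ T.CTf ↔ ∀ k, (T.pos (s k)).2 = (T.pos k).2 := by
  simp [CTf]

lemma one_mem_RTf : (1 : Equiv.Perm (Fin l)) ∈ T.RTf := (T.mem_RTf).mpr (fun _ => rfl)

lemma one_mem_CTf : (1 : Equiv.Perm (Fin l)) ∈ T.CTf := (T.mem_CTf).mpr (fun _ => rfl)

lemma mul_mem_RTf {s t : Equiv.Perm (Fin l)} (hs : s ∈ T.RTf) (ht : t ∈ T.RTf) :
    s * t ∈ T.RTf := by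
  rw [mem_RTf] at *
  intro k
  rw [Equiv.Perm.mul_apply, hs (t k), ht k]

lemma mul_mem_CTf {s t : Equiv.Perm (Fin l)} (hs : s ∈ T.CTf) (ht : t ∈ T.CTf) :
    s * t ∈ T.CTf := by
  rw [mem_CTf] at *
  intro k
  rw [Equiv.Perm.mul_apply, hs (t k), ht k]

lemma inv_mem_RTf {s : Equiv.Perm (Fin l)} (hs : s ∈ T.RTf) : s⁻¹ ∈ T.RTf := by
  rw [mem_RTf] at *
  intro k
  conv_rhs => rw [← Equiv.apply_symm_apply s k, ← Equiv.Perm.coe_inv]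
  rw [hs]

lemma inv_mem_CTf {s : Equiv.Perm (Fin l)} (hs : s ∈ T.CTf) : s⁻¹ ∈ T.CTf := by
  rw [mem_CTf] at *
  intro k
  conv_rhs => rw [← Equiv.apply_symm_apply s k, ← Equiv.Perm.coe_inv]
  rw [hs]

lemma RTf_inter_CTf {s : Equiv.Perm (Fin l)} (hr : s ∈ T.RTf) (hc : s ∈ T.CTf) :
    s = 1 := by
  rw [mem_RTf] at hr
  rw [mem_CTf] at hc
  ext k
  have : T.pos (s k) = T.pos k := Prod.ext (hr k) (hc k)
  have := T.inj this
  simp [this]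

lemma pElt_eq : T.pElt = ∑ s ∈ T.RTf, MonoidAlgebra.of ℂ (Equiv.Perm (Fin l)) s := by
  rw [pElt, RTf, Finset.sum_filter]

lemma qElt_eq : T.qElt = ∑ s ∈ T.CTf,
    sgnC s • MonoidAlgebra.of ℂ (Equiv.Perm (Fin l)) s := by
  rw [qElt, CTf, Finset.sum_filter]
  rfl

end SkewStdTableau

end TabAlg

section TabAlg2

variable {l : ℕ} {lam : ℕ → ℕ}

namespace SkewStdTableau

variable (T : SkewStdTableau l (fun _ => 0) lam)

local notation "ofG" => MonoidAlgebra.of ℂ (Equiv.Perm (Fin l))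

lemma pElt_mul_of {t : Equiv.Perm (Fin l)} (ht : t ∈ T.RTf) :
    T.pElt * ofG t = T.pElt := by
  rw [pElt_eq, Finset.sum_mul]
  apply Finset.sum_equiv (Equiv.mulRight t)
  · intro r
    constructor
    · intro hr; exact T.mul_mem_RTf hr ht
    · intro hr
      have := T.mul_mem_RTf hr (T.inv_mem_RTf ht)
      simpa using this
  · intro r _
    simp [MonoidAlgebra.of_apply, MonoidAlgebra.single_mul_single]

lemma of_mul_pElt {t : Equiv.Perm (Fin l)} (ht : t ∈ T.RTf) :
    ofG t * T.pElt = T.pElt := by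
  rw [pElt_eq, Finset.mul_sum]
  apply Finset.sum_equiv (Equiv.mulLeft t)
  · intro r
    constructor
    · intro hr; exact T.mul_mem_RTf ht hr
    · intro hr
      have := T.mul_mem_RTf (T.inv_mem_RTf ht) hr
      simpa using this
  · intro r _
    simp [MonoidAlgebra.of_apply, MonoidAlgebra.single_mul_single]

lemma qElt_mul_of {t : Equiv.Perm (Fin l)} (ht : t ∈ T.CTf) :
    T.qElt * ofG t = sgnC t • T.qElt := by
  rw [qElt_eq, Finset.sum_mul, Finset.smul_sum]
  apply Finset.sum_equiv (Equiv.mulRight t)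
  · intro c
    constructor
    · intro hc; exact T.mul_mem_CTf hc ht
    · intro hc
      have := T.mul_mem_CTf hc (T.inv_mem_CTf ht)
      simpa using this
  · intro c _
    simp only [Equiv.coe_mulRight, smul_smul, smul_mul_assoc]
    rw [← _root_.map_mul, sgnC_mul]
    congr 1
    rw [mul_comm (sgnC c) (sgnC t), ← mul_assoc, sgnC_sq, one_mul]

lemma of_mul_qElt {t : Equiv.Perm (Fin l)} (ht : t ∈ T.CTf) :
    ofG t * T.qElt = sgnC t • T.qElt := by
  rw [qElt_eq, Finset.mul_sum, Finset.smul_sum]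
  apply Finset.sum_equiv (Equiv.mulLeft t)
  · intro c
    constructor
    · intro hc; exact T.mul_mem_CTf ht hc
    · intro hc
      have := T.mul_mem_CTf (T.inv_mem_CTf ht) hc
      simpa using this
  · intro c _
    simp only [Equiv.coe_mulLeft, smul_smul, mul_smul_comm]
    rw [← _root_.map_mul, sgnC_mul]
    congr 1
    rw [← mul_assoc, sgnC_sq, one_mul]

lemma pElt_sq : T.pElt * T.pElt = (T.RTf.card : ℂ) • T.pElt := by
  nth_rewrite 2 [pElt_eq]
  rw [Finset.mul_sum]
  rw [Finset.sum_congr rfl (fun t ht => T.pElt_mul_of ht), Finset.sum_const,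
    ← Nat.cast_smul_eq_nsmul ℂ]

lemma qElt_sq : T.qElt * T.qElt = (T.CTf.card : ℂ) • T.qElt := by
  nth_rewrite 2 [qElt_eq]
  rw [Finset.mul_sum]
  have h : ∀ t ∈ T.CTf, T.qElt * (sgnC t • ofG t) = T.qElt := by
    intro t ht
    rw [mul_smul_comm, T.qElt_mul_of ht, smul_smul, sgnC_sq, one_smul]
  rw [Finset.sum_congr rfl h, Finset.sum_const, ← Nat.cast_smul_eq_nsmul ℂ]

end SkewStdTableau

end TabAlg2

section TabAlg3

variable {l : ℕ} {lam : ℕ → ℕ}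

namespace SkewStdTableau

variable (T : SkewStdTableau l (fun _ => 0) lam)

local notation "ofG" => MonoidAlgebra.of ℂ (Equiv.Perm (Fin l))

lemma swap_mem_RTf {a b : Fin l} (h : (T.pos a).1 = (T.pos b).1) :
    Equiv.swap a b ∈ T.RTf := by
  rw [mem_RTf]
  intro k
  rcases eq_or_ne k a with rfl | hka
  · rw [Equiv.swap_apply_left, h]
  · rcases eq_or_ne k b with rfl | hkb
    · rw [Equiv.swap_apply_right, h]
    · rw [Equiv.swap_apply_of_ne_of_ne hka hkb]

lemma swap_mem_CTf {a b : Fin l} (h : (T.pos a).2 = (T.pos b).2) :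
    Equiv.swap a b ∈ T.CTf := by
  rw [mem_CTf]
  intro k
  rcases eq_or_ne k a with rfl | hka
  · rw [Equiv.swap_apply_left, h]
  · rcases eq_or_ne k b with rfl | hkb
    · rw [Equiv.swap_apply_right, h]
    · rw [Equiv.swap_apply_of_ne_of_ne hka hkb]

lemma dichotomy (hA : Antitone lam) (hl : lam l = 0) (u : Equiv.Perm (Fin l)) :
    (∃ a b, a ≠ b ∧ (T.pos a).1 = (T.pos b).1 ∧ (T.pos (u a)).2 = (T.pos (u b)).2)
    ∨ ∃ r c, r ∈ T.RTf ∧ c ∈ T.CTf ∧ u = c⁻¹ * r := by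
  by_cases h : ∃ a b, a ≠ b ∧ (T.pos a).1 = (T.pos b).1 ∧ (T.pos (u a)).2 = (T.pos (u b)).2
  · left; exact h
  · right
    push_neg at h
    obtain ⟨r, c, hr, hc, hu⟩ := decomp hA hl T.pos T.inj T.mem_upper
      (fun i j hj => T.surj i j (Nat.zero_le j) hj) u
      (fun a b hab hrow => h a b hab hrow)
    exact ⟨r, c, T.mem_RTf.mpr hr, T.mem_CTf.mpr hc, hu⟩

lemma smul_cancel_two {x : GA l} (h : x = -x) : x = 0 := by
  have hxx : x + x = 0 := by
    nth_rewrite 2 [h]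
    abel
  have h2 : (2 : ℂ) • x = 0 := by rw [two_smul, hxx]
  have := smul_eq_zero.mp h2
  rcases this with h' | h'
  · norm_num at h'
  · exact h'

lemma p_of_q (hA : Antitone lam) (hl : lam l = 0) (s : Equiv.Perm (Fin l)) :
    ∃ z : ℂ, T.pElt * ofG s * T.qElt = z • (T.pElt * T.qElt) := by
  rcases T.dichotomy hA hl s⁻¹ with ⟨a, b, hab, hrow, hcol⟩ | ⟨r, c, hr, hc, hu⟩
  · refine ⟨0, ?_⟩
    rw [zero_smul]
    set τ := Equiv.swap a b with hτ
    set σ := s⁻¹ * τ * s with hσ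
    have hτR : τ ∈ T.RTf := T.swap_mem_RTf hrow
    have hσswap : σ = Equiv.swap (s⁻¹ a) (s⁻¹ b) := by
      rw [hσ, hτ, Equiv.swap_apply_apply s⁻¹ a b]
      group
    have hσC : σ ∈ T.CTf := by
      rw [hσswap]
      exact T.swap_mem_CTf hcol
    have hσsgn : sgnC σ = -1 := by
      rw [hσswap]
      exact sgnC_swap (fun h => hab (s⁻¹.injective h))
    have key : T.pElt * ofG s * T.qElt = -(T.pElt * ofG s * T.qElt) := by
      conv_lhs => rw [← T.pElt_mul_of hτR]
      calc T.pElt * ofG τ * ofG s * T.qElt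
          = T.pElt * ofG (τ * s) * T.qElt := by rw [mul_assoc (T.pElt), ← _root_.map_mul]
        _ = T.pElt * ofG (s * σ) * T.qElt := by rw [hσ]; congr 2; group
        _ = T.pElt * ofG s * (ofG σ * T.qElt) := by
            rw [_root_.map_mul]
            noncomm_ring
        _ = -(T.pElt * ofG s * T.qElt) := by
            rw [T.of_mul_qElt hσC, hσsgn, neg_one_smul, mul_neg]
    exact smul_cancel_two key
  · refine ⟨sgnC c, ?_⟩
    have hs : s = r⁻¹ * c := by
      have : s⁻¹ = c⁻¹ * r := hu
      calc s = (s⁻¹)⁻¹ := by group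
        _ = (c⁻¹ * r)⁻¹ := by rw [this]
        _ = r⁻¹ * c := by group
    rw [hs, _root_.map_mul, ← mul_assoc, T.pElt_mul_of (T.inv_mem_RTf hr),
      mul_assoc, T.of_mul_qElt hc, mul_smul_comm]

lemma q_of_p (hA : Antitone lam) (hl : lam l = 0) (s : Equiv.Perm (Fin l)) :
    ∃ z : ℂ, T.qElt * ofG s * T.pElt = z • (T.qElt * T.pElt) := by
  rcases T.dichotomy hA hl s with ⟨a, b, hab, hrow, hcol⟩ | ⟨r, c, hr, hc, hu⟩
  · refine ⟨0, ?_⟩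
    rw [zero_smul]
    set τ := Equiv.swap a b with hτ
    set σ := s * τ * s⁻¹ with hσ
    have hτR : τ ∈ T.RTf := T.swap_mem_RTf hrow
    have hσswap : σ = Equiv.swap (s a) (s b) := by
      rw [hσ, hτ, Equiv.swap_apply_apply s a b]
    have hσC : σ ∈ T.CTf := by
      rw [hσswap]
      exact T.swap_mem_CTf hcol
    have hσsgn : sgnC σ = -1 := by
      rw [hσswap]
      exact sgnC_swap (fun h => hab (s.injective h))
    have key : T.qElt * ofG s * T.pElt = -(T.qElt * ofG s * T.pElt) := by
      conv_lhs => rw [← T.of_mul_pElt hτR]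
      calc T.qElt * ofG s * (ofG τ * T.pElt)
          = T.qElt * ofG (s * τ) * T.pElt := by
            rw [_root_.map_mul]
            noncomm_ring
        _ = T.qElt * ofG (σ * s) * T.pElt := by rw [hσ]; congr 2; group
        _ = (T.qElt * ofG σ) * (ofG s * T.pElt) := by
            rw [_root_.map_mul]
            noncomm_ring
        _ = -(T.qElt * ofG s * T.pElt) := by
            rw [T.qElt_mul_of hσC, hσsgn, neg_one_smul, neg_mul]
            noncomm_ring
    exact smul_cancel_two key
  · refine ⟨sgnC c⁻¹, ?_⟩
    rw [hu, _root_.map_mul, ← mul_assoc, T.qElt_mul_of (T.inv_mem_CTf hc),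
      smul_mul_assoc, smul_mul_assoc, mul_assoc, T.of_mul_pElt hr]

end SkewStdTableau

end TabAlg3

section TabAlg4

variable {l : ℕ} {lam : ℕ → ℕ}

namespace SkewStdTableau

variable (T : SkewStdTableau l (fun _ => 0) lam)

local notation "ofG" => MonoidAlgebra.of ℂ (Equiv.Perm (Fin l))

lemma p_x_q (hA : Antitone lam) (hl : lam l = 0) (x : GA l) :
    ∃ z : ℂ, T.pElt * x * T.qElt = z • (T.pElt * T.qElt) := by
  induction x using MonoidAlgebra.induction_linear with
  | zero => exact ⟨0, by simp⟩
  | add f g hf hg =>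
    obtain ⟨z1, h1⟩ := hf
    obtain ⟨z2, h2⟩ := hg
    refine ⟨z1 + z2, ?_⟩
    rw [mul_add, add_mul, h1, h2, add_smul]
  | single g c =>
    obtain ⟨z, hz⟩ := T.p_of_q hA hl g
    refine ⟨c * z, ?_⟩
    have hs : (MonoidAlgebra.single g c : GA l) = c • ofG g := by
      rw [MonoidAlgebra.of_apply, MonoidAlgebra.smul_single', mul_one]
    rw [hs, mul_smul_comm, smul_mul_assoc, hz, smul_smul]

lemma q_x_p (hA : Antitone lam) (hl : lam l = 0) (x : GA l) :
    ∃ z : ℂ, T.qElt * x * T.pElt = z • (T.qElt * T.pElt) := by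
  induction x using MonoidAlgebra.induction_linear with
  | zero => exact ⟨0, by simp⟩
  | add f g hf hg =>
    obtain ⟨z1, h1⟩ := hf
    obtain ⟨z2, h2⟩ := hg
    refine ⟨z1 + z2, ?_⟩
    rw [mul_add, add_mul, h1, h2, add_smul]
  | single g c =>
    obtain ⟨z, hz⟩ := T.q_of_p hA hl g
    refine ⟨c * z, ?_⟩
    have hs : (MonoidAlgebra.single g c : GA l) = c • ofG g := by
      rw [MonoidAlgebra.of_apply, MonoidAlgebra.smul_single', mul_one]
    rw [hs, mul_smul_comm, smul_mul_assoc, hz, smul_smul]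

lemma pq_sq (hA : Antitone lam) (hl : lam l = 0) :
    ∃ h : ℂ, (T.pElt * T.qElt) * (T.pElt * T.qElt) = h • (T.pElt * T.qElt) := by
  obtain ⟨z, hz⟩ := T.p_x_q hA hl (T.qElt * T.pElt)
  refine ⟨z, ?_⟩
  calc (T.pElt * T.qElt) * (T.pElt * T.qElt)
      = T.pElt * (T.qElt * T.pElt) * T.qElt := by noncomm_ring
    _ = z • (T.pElt * T.qElt) := hz

lemma qp_sq (hA : Antitone lam) (hl : lam l = 0) :
    ∃ h : ℂ, (T.qElt * T.pElt) * (T.qElt * T.pElt) = h • (T.qElt * T.pElt) := by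
  obtain ⟨z, hz⟩ := T.q_x_p hA hl (T.pElt * T.qElt)
  refine ⟨z, ?_⟩
  calc (T.qElt * T.pElt) * (T.qElt * T.pElt)
      = T.qElt * (T.pElt * T.qElt) * T.pElt := by noncomm_ring
    _ = z • (T.qElt * T.pElt) := hz

end SkewStdTableau

end TabAlg4

section TabAlg5

variable {l : ℕ} {lam : ℕ → ℕ}

namespace SkewStdTableau

variable (T : SkewStdTableau l (fun _ => 0) lam)

local notation "ofG" => MonoidAlgebra.of ℂ (Equiv.Perm (Fin l))

lemma coeff_pq : (T.pElt * T.qElt).coeff 1 = 1 := by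
  rw [pElt_eq, qElt_eq, Finset.sum_mul, MonoidAlgebra.coeff_sum, Finset.sum_apply']
  have hterm : ∀ r ∈ T.RTf,
      ((ofG r * ∑ c ∈ T.CTf, sgnC c • ofG c) : GA l).coeff 1
        = if r = 1 then 1 else 0 := by
    intro r hr
    rw [Finset.mul_sum, MonoidAlgebra.coeff_sum, Finset.sum_apply']
    have hc : ∀ c ∈ T.CTf, ((ofG r * (sgnC c • ofG c)) : GA l).coeff 1
        = if c = r⁻¹ then sgnC c else 0 := by
      intro c _
      rw [mul_smul_comm, MonoidAlgebra.coeff_smul, Finsupp.smul_apply, MonoidAlgebra.of_apply,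
        MonoidAlgebra.of_apply, MonoidAlgebra.single_mul_single, one_mul,
        MonoidAlgebra.coeff_single, Finsupp.single_apply]
      by_cases h : c = r⁻¹
      · subst h
        simp
      · rw [if_neg, if_neg h, smul_zero]
        intro hrc
        exact h (eq_inv_of_mul_eq_one_right hrc)
    rw [Finset.sum_congr rfl hc, Finset.sum_ite_eq' T.CTf r⁻¹ sgnC]
    by_cases hr1 : r = 1
    · subst hr1
      rw [if_pos, if_pos rfl]
      · simp [sgnC_one]
      · simpa using T.one_mem_CTf
    · rw [if_neg, if_neg hr1]
      intro hmem
      exact hr1 (by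
        have := T.RTf_inter_CTf (T.inv_mem_RTf hr) hmem
        have h1 : r⁻¹ = 1 := this
        simpa using congrArg (·⁻¹) h1)
  rw [Finset.sum_congr rfl hterm, Finset.sum_ite_eq' T.RTf 1 (fun _ => (1 : ℂ))]
  rw [if_pos T.one_mem_RTf]

lemma coeff_qp : (T.qElt * T.pElt).coeff 1 = 1 := by
  rw [pElt_eq, qElt_eq, Finset.sum_mul, MonoidAlgebra.coeff_sum, Finset.sum_apply']
  have hterm : ∀ c ∈ T.CTf,
      (((sgnC c • ofG c) * ∑ r ∈ T.RTf, ofG r) : GA l).coeff 1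
        = if c = 1 then 1 else 0 := by
    intro c hc
    rw [Finset.mul_sum, MonoidAlgebra.coeff_sum, Finset.sum_apply']
    have hr : ∀ r ∈ T.RTf, (((sgnC c • ofG c) * ofG r) : GA l).coeff 1
        = if r = c⁻¹ then sgnC c else 0 := by
      intro r _
      rw [smul_mul_assoc, MonoidAlgebra.coeff_smul, Finsupp.smul_apply, MonoidAlgebra.of_apply,
        MonoidAlgebra.of_apply, MonoidAlgebra.single_mul_single, one_mul,
        MonoidAlgebra.coeff_single, Finsupp.single_apply]
      by_cases h : r = c⁻¹
      · subst h
        simp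
      · rw [if_neg, if_neg h, smul_zero]
        intro hcr
        exact h (eq_inv_of_mul_eq_one_right hcr)
    rw [Finset.sum_congr rfl hr, Finset.sum_ite_eq' T.RTf c⁻¹ (fun _ => sgnC c)]
    by_cases hc1 : c = 1
    · subst hc1
      rw [if_pos, if_pos rfl]
      · simp [sgnC_one]
      · simpa using T.one_mem_RTf
    · rw [if_neg, if_neg hc1]
      intro hmem
      exact hc1 (by
        have := T.RTf_inter_CTf hmem (T.inv_mem_CTf hc)
        have h1 : c⁻¹ = 1 := this
        simpa using congrArg (·⁻¹) h1)
  rw [Finset.sum_congr rfl hterm, Finset.sum_ite_eq' T.CTf 1 (fun _ => (1 : ℂ))]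
  rw [if_pos T.one_mem_CTf]

end SkewStdTableau

end TabAlg5

section Trace

variable {l : ℕ}

/-- The obvious basis of the group algebra. -/
def gaBasis (l : ℕ) : Module.Basis (Equiv.Perm (Fin l)) ℂ (GA l) :=
  Module.Basis.ofRepr (MonoidAlgebra.coeffLinearEquiv ℂ)

lemma scalar_ne_zero_of_coeff_one {x : GA l} (hx : x.coeff 1 = 1) {h : ℂ}
    (hsq : x * x = h • x) : h ≠ 0 := by
  intro h0
  rw [h0, zero_smul] at hsq
  have hnil : IsNilpotent (LinearMap.mulLeft ℂ x) := by
    refine ⟨2, ?_⟩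
    rw [LinearMap.pow_mulLeft, pow_two, hsq]
    ext y
    simp
  haveI : Module.Finite ℂ (GA l) := Module.Finite.of_basis (gaBasis l)
  haveI : Module.Free ℂ (GA l) := Module.Free.of_basis (gaBasis l)
  have htr := LinearMap.isNilpotent_trace_of_isNilpotent hnil
  have htr0 : LinearMap.trace ℂ (GA l) (LinearMap.mulLeft ℂ x) = 0 := htr.eq_zero
  rw [LinearMap.trace_eq_matrix_trace ℂ (gaBasis l), Matrix.trace] at htr0
  have hdiag : ∀ g : Equiv.Perm (Fin l),
      (LinearMap.toMatrix (gaBasis l) (gaBasis l) (LinearMap.mulLeft ℂ x)).diag g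
        = 1 := by
    intro g
    rw [Matrix.diag_apply, LinearMap.toMatrix_apply]
    show (x * MonoidAlgebra.single g 1 : GA l).coeff g = 1
    rw [MonoidAlgebra.coeff_mul_single_apply, mul_inv_cancel, hx, mul_one]
  rw [Finset.sum_congr rfl (fun g _ => hdiag g), Finset.sum_const, nsmul_eq_mul,
    mul_one] at htr0
  have hcard : (Fintype.card (Equiv.Perm (Fin l)) : ℂ) ≠ 0 := by
    simp [Fintype.card_ne_zero]
  exact hcard htr0

end Trace

section UnitLemma

variable {l : ℕ}

lemma unit_lemma (P Q : GA l) (m h : ℂ) (hm : m ≠ 0) (hh : h ≠ 0)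
    (hP : P * P = m • P) (hE : (P * Q) * (P * Q) = h • (P * Q)) :
    ∃ u : GA l, IsUnit u ∧ P * Q * P = P * Q * u := by
  set e := P * Q with he
  set f := h⁻¹ • e with hfdef
  have hf : f * f = f := by
    rw [hfdef, smul_mul_assoc, mul_smul_comm, smul_smul, hE, smul_smul]
    congr 1
    field_simp
  have hef : e * f = e := by
    rw [hfdef, mul_smul_comm, hE, smul_smul, inv_mul_cancel₀ hh, one_smul]
  have hepe : e * P * e = (m * h) • e := by
    calc e * P * e = P * Q * (P * P) * Q := by rw [he]; noncomm_ring
      _ = m • (e * e) := by rw [hP, he]; rw [mul_smul_comm, smul_mul_assoc]; noncomm_ring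
      _ = (m * h) • e := by rw [hE, smul_smul]
  have hfpf : f * P * f = m • f := by
    rw [hfdef, smul_mul_assoc, smul_mul_assoc, mul_smul_comm, hepe, smul_smul, smul_smul,
      smul_smul]
    congr 1
    field_simp
  set b := f * P with hbdef
  have hab : f * b = b := by rw [hbdef, ← mul_assoc, hf]
  have hba : b * f = m • f := by rw [hbdef]; exact hfpf
  have hbb : b * b = m • b := by
    calc b * b = (f * P * f) * P := by rw [hbdef]; noncomm_ring
      _ = m • b := by rw [hfpf, smul_mul_assoc, hbdef]
  refine ⟨1 - f + b, ?_, ?_⟩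
  · refine isUnit_iff_exists.mpr ⟨1 + m⁻¹ • f - m⁻¹ • b, ?_, ?_⟩
    · simp only [mul_add, mul_sub, add_mul, sub_mul, one_mul, mul_one,
        mul_smul_comm, smul_mul_assoc, hf, hab, hba, hbb, smul_smul]
      match_scalars <;> (field_simp; try ring)
    · simp only [mul_add, mul_sub, add_mul, sub_mul, one_mul, mul_one,
        mul_smul_comm, smul_mul_assoc, hf, hab, hba, hbb, smul_smul]
      match_scalars <;> (field_simp; try ring)
  · have : e * (1 - f + b) = e * P := by
      rw [mul_add, mul_sub, mul_one, hef, hbdef, ← mul_assoc, hef]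
      abel
    calc P * Q * P = e * P := by rw [he]
      _ = e * (1 - f + b) := this.symm
      _ = P * Q * (1 - f + b) := by rw [he]

end UnitLemma

section Assemble

variable {l : ℕ} {lam : ℕ → ℕ}

lemma exists_unit_p (hA : Antitone lam) (hl : lam l = 0)
    (T : SkewStdTableau l (fun _ => 0) lam) :
    ∃ u : GA l, IsUnit u ∧ T.pElt * T.qElt * T.pElt = T.pElt * T.qElt * u := by
  obtain ⟨h, hE⟩ := T.pq_sq hA hl
  have hm : (T.RTf.card : ℂ) ≠ 0 :=
    Nat.cast_ne_zero.mpr (Finset.card_ne_zero_of_mem T.one_mem_RTf)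
  have hh : h ≠ 0 := scalar_ne_zero_of_coeff_one T.coeff_pq hE
  exact unit_lemma T.pElt T.qElt _ h hm hh T.pElt_sq hE

lemma exists_unit_q (hA : Antitone lam) (hl : lam l = 0)
    (T : SkewStdTableau l (fun _ => 0) lam) :
    ∃ u : GA l, IsUnit u ∧ T.qElt * T.pElt * T.qElt = T.qElt * T.pElt * u := by
  obtain ⟨h, hE⟩ := T.qp_sq hA hl
  have hm : (T.CTf.card : ℂ) ≠ 0 :=
    Nat.cast_ne_zero.mpr (Finset.card_ne_zero_of_mem T.one_mem_CTf)
  have hh : h ≠ 0 := scalar_ne_zero_of_coeff_one T.coeff_qp hE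
  exact unit_lemma T.qElt T.pElt _ h hm hh T.qElt_sq hE

end Assemble


theorem statement_0 (l : ℕ) (hl : 1 ≤ l) (lam : ℕ → ℕ) (hlam : IsPartitionOf l lam)
    (Tr Tc : SkewStdTableau l (fun _ => 0) lam)
    (hTr : Tr.IsRowTableau) (hTc : Tc.IsColTableau) :
    ∃ p q : GA l, IsUnit p ∧ IsUnit q ∧
      Tr.pElt * Tr.qElt * Tr.pElt = Tr.pElt * Tr.qElt * p ∧
      Tc.qElt * Tc.pElt * Tc.qElt = Tc.qElt * Tc.pElt * q := by
  obtain ⟨hA, hl0, -⟩ := hlam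
  obtain ⟨p, hp, hpe⟩ := exists_unit_p hA hl0 Tr
  obtain ⟨q, hq, hqe⟩ := exists_unit_q hA hl0 Tc
  exact ⟨p, q, hp, hq, hpe, hqe⟩

end
end

section
/- Let λ be a partition of l, Λ a standard tableau of shape λ with contents c_k = c_k(Λ), and m ∈ {0,…,l−1}. Let θ_m : ℂS_l → ℂS_l be the linear map with θ_m(s) = s if the permutation s preserves the subset {1,…,m}, and θ_m(s) = 0 otherwise. Then, with f_{ij}(x,y) = 1 − (i j)/(x−y), the equality θ_m( ∏^→_{1≤i<j≤l} f_{ij}(c_i + t_i, c_j + t_j) ) = ∏^→_{1≤i<j≤m} f_{ij}(c_i + t_i, c_j + t_j) · ∏^→_{m<i<j≤l} f_{ij}(c_i + t_i, c_j + t_j) holds as an identity of ℂS_l-valued rational functions of t_1,…,t_l. -/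
open scoped BigOperators
open scoped Classical
open Matrix

noncomputable section

/-! ### Auxiliary lemmas for Statement 4 -/

section Statement4Aux

open MonoidAlgebra List

/-- The predicate: a permutation preserves `{0,…,m-1}`. -/
def Pres (l m : ℕ) (t : Equiv.Perm (Fin l)) : Prop :=
  ∀ k : Fin l, (k : ℕ) < m → ((t k : ℕ) < m)

variable {l m : ℕ}

lemma theta_apply' (a : GA l) (t : Equiv.Perm (Fin l)) :
    (theta l m a).coeff t = if Pres l m t then a.coeff t else 0 := by
  classical
  unfold theta Pres
  rw [MonoidAlgebra.coeff_sum, Finset.sum_apply']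
  rw [Finset.sum_eq_single t]
  · by_cases h : ∀ k : Fin l, (k : ℕ) < m → ((t k : ℕ) < m)
    · rw [if_pos h, if_pos h, MonoidAlgebra.coeff_single, Finsupp.single_eq_same]
    · rw [if_neg h, if_neg h]
      rfl
  · intro s _ hst
    by_cases h : ∀ k : Fin l, (k : ℕ) < m → ((s k : ℕ) < m)
    · rw [if_pos h]
      exact Finsupp.single_eq_of_ne' hst
    · rw [if_neg h]
      rfl
  · intro h; exact absurd (Finset.mem_univ t) h

lemma ga_sub_apply (a b : GA l) (t : Equiv.Perm (Fin l)) :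
    (a - b).coeff t = a.coeff t - b.coeff t := rfl

lemma ga_add_apply (a b : GA l) (t : Equiv.Perm (Fin l)) :
    (a + b).coeff t = a.coeff t + b.coeff t := rfl

lemma theta_sub (a b : GA l) :
    theta l m (a - b) = theta l m a - theta l m b := by
  ext t
  simp only [theta_apply', ga_sub_apply]
  split <;> simp

lemma theta_add (a b : GA l) :
    theta l m (a + b) = theta l m a + theta l m b := by
  ext t
  simp only [theta_apply', ga_add_apply]
  split <;> simp

lemma pres_one : Pres l m 1 := fun k hk => by simpa using hk

lemma pres_mul {u v : Equiv.Perm (Fin l)} (hu : Pres l m u) (hv : Pres l m v) :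
    Pres l m (u * v) := fun k hk => by
  rw [Equiv.Perm.mul_apply]; exact hu _ (hv _ hk)

lemma pres_inv {u : Equiv.Perm (Fin l)} (hu : Pres l m u) : Pres l m u⁻¹ := by
  classical
  intro k hk
  set S : Finset (Fin l) := Finset.univ.filter (fun x => (x : ℕ) < m) with hS
  have hsub : S.image u ⊆ S := by
    intro x hx
    obtain ⟨y, hy, rfl⟩ := Finset.mem_image.mp hx
    simp only [hS, Finset.mem_filter, Finset.mem_univ, true_and] at hy ⊢
    exact hu y hy
  have hcard : (S.image u).card = S.card := Finset.card_image_of_injective _ u.injective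
  have heq : S.image u = S := Finset.eq_of_subset_of_card_le hsub (le_of_eq hcard.symm)
  have hk' : k ∈ S := by simp [hS, hk]
  rw [← heq] at hk'
  obtain ⟨y, hy, hyk⟩ := Finset.mem_image.mp hk'
  have h2 : u⁻¹ k = y := by rw [← hyk]; simp
  rw [h2]
  simpa [hS] using hy

lemma pres_swap_lt {i j : Fin l} (hi : (i : ℕ) < m) (hj : (j : ℕ) < m) :
    Pres l m (Equiv.swap i j) := by
  intro k hk
  by_cases h1 : k = i
  · subst h1; rw [Equiv.swap_apply_left]; exact hj
  · by_cases h2 : k = j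
    · subst h2; rw [Equiv.swap_apply_right]; exact hi
    · rw [Equiv.swap_apply_of_ne_of_ne h1 h2]; exact hk

lemma pres_swap_ge {i j : Fin l} (hi : m ≤ (i : ℕ)) (hj : m ≤ (j : ℕ)) :
    Pres l m (Equiv.swap i j) := by
  intro k hk
  rw [Equiv.swap_apply_of_ne_of_ne (Fin.ne_of_val_ne (by omega)) (Fin.ne_of_val_ne (by omega))]
  exact hk

lemma pres_inv_mul_iff {u t : Equiv.Perm (Fin l)} (hu : Pres l m u) :
    Pres l m (u⁻¹ * t) ↔ Pres l m t := by
  constructor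
  · intro h k hk
    have h1 := hu _ (h k hk)
    simpa using h1
  · intro h k hk
    have := pres_inv hu _ (h k hk)
    simpa using this

lemma pres_mul_inv_iff {v t : Equiv.Perm (Fin l)} (hv : Pres l m v) :
    Pres l m (t * v⁻¹) ↔ Pres l m t := by
  constructor
  · intro h k hk
    have h1 := h (v k) (hv k hk)
    simpa using h1
  · intro h k hk
    have h1 := pres_inv hv k hk
    have := h _ h1
    simpa using this

lemma theta_single_mul {u : Equiv.Perm (Fin l)} (hu : Pres l m u) (c : ℂ) (x : GA l) :
    theta l m (MonoidAlgebra.single u c * x) = MonoidAlgebra.single u c * theta l m x := by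
  ext t
  rw [theta_apply', MonoidAlgebra.single_mul_apply, MonoidAlgebra.single_mul_apply, theta_apply']
  by_cases h : Pres l m t
  · rw [if_pos h, if_pos ((pres_inv_mul_iff hu).mpr h)]
  · rw [if_neg h, if_neg (fun hh => h ((pres_inv_mul_iff hu).mp hh)), mul_zero]

lemma theta_mul_single {v : Equiv.Perm (Fin l)} (hv : Pres l m v) (c : ℂ) (x : GA l) :
    theta l m (x * MonoidAlgebra.single v c) = theta l m x * MonoidAlgebra.single v c := by
  ext t
  rw [theta_apply', MonoidAlgebra.mul_single_apply, MonoidAlgebra.mul_single_apply, theta_apply']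
  by_cases h : Pres l m t
  · rw [if_pos h, if_pos ((pres_mul_inv_iff hv).mpr h)]
  · rw [if_neg h, if_neg (fun hh => h ((pres_mul_inv_iff hv).mp hh)), zero_mul]

lemma theta_sum {ι : Type*} (S : Finset ι) (f : ι → GA l) :
    theta l m (∑ i ∈ S, f i) = ∑ i ∈ S, theta l m (f i) := by
  classical
  induction S using Finset.induction_on with
  | empty =>
    simp only [Finset.sum_empty]
    ext t; rw [theta_apply']; split <;> simp
  | insert _ _ hni ih =>
    rw [Finset.sum_insert hni, Finset.sum_insert hni, theta_add, ih]

lemma theta_mul_left (a x : GA l) (ha : ∀ s ∈ a.coeff.support, Pres l m s) :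
    theta l m (a * x) = a * theta l m x := by
  have hsum : a = ∑ s ∈ a.coeff.support, MonoidAlgebra.single s (a.coeff s) :=
    (MonoidAlgebra.sum_coeff_single a).symm
  have h1 : a * x = ∑ s ∈ a.coeff.support, MonoidAlgebra.single s (a.coeff s) * x := by
    conv_lhs => rw [hsum]
    rw [Finset.sum_mul]
  have h2 : a * theta l m x = ∑ s ∈ a.coeff.support, MonoidAlgebra.single s (a.coeff s) * theta l m x := by
    conv_lhs => rw [hsum]
    rw [Finset.sum_mul]
  rw [h1, h2, theta_sum]
  exact Finset.sum_congr rfl fun s hs => theta_single_mul (ha s hs) _ _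

lemma theta_mul_right (x b : GA l) (hb : ∀ s ∈ b.coeff.support, Pres l m s) :
    theta l m (x * b) = theta l m x * b := by
  have hsum : b = ∑ s ∈ b.coeff.support, MonoidAlgebra.single s (b.coeff s) :=
    (MonoidAlgebra.sum_coeff_single b).symm
  have h1 : x * b = ∑ s ∈ b.coeff.support, x * MonoidAlgebra.single s (b.coeff s) := by
    conv_lhs => rw [hsum]
    rw [Finset.mul_sum]
  have h2 : theta l m x * b = ∑ s ∈ b.coeff.support, theta l m x * MonoidAlgebra.single s (b.coeff s) := by
    conv_lhs => rw [hsum]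
    rw [Finset.mul_sum]
  rw [h1, h2, theta_sum]
  exact Finset.sum_congr rfl fun s hs => theta_mul_single (hb s hs) _ _

lemma theta_one : theta l m (1 : GA l) = 1 := by
  ext t
  rw [theta_apply']
  by_cases h : Pres l m t
  · rw [if_pos h]
  · rw [if_neg h]
    have ht : t ≠ 1 := fun ht => h (ht ▸ pres_one)
    rw [MonoidAlgebra.one_def, MonoidAlgebra.single_apply, if_neg (fun hh => ht hh.symm)]

lemma swapElt_smul (c : ℂ) (i j : Fin l) :
    c • swapElt ℂ i j = MonoidAlgebra.single (Equiv.swap i j) c := by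
  rw [swapElt, MonoidAlgebra.of_apply, MonoidAlgebra.smul_single', mul_one]

lemma factor_mul_apply (d : ℂ) (i j : Fin l) (P : GA l) (t : Equiv.Perm (Fin l)) :
    (((1 : GA l) - d • swapElt ℂ i j) * P).coeff t
      = P.coeff t - d * P.coeff (Equiv.swap i j * t) := by
  rw [sub_mul, one_mul, swapElt_smul, MonoidAlgebra.coeff_sub, Finsupp.sub_apply, MonoidAlgebra.single_mul_apply,
    Equiv.swap_inv]

/-- The main combinatorial lemma about ordered products over "mixed" pairs. -/
lemma mixed_main (d : Fin l × Fin l → ℂ) :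
    ∀ M : List (Fin l × Fin l),
      (∀ p ∈ M, (p.1 : ℕ) < m ∧ m ≤ (p.2 : ℕ)) →
      ∀ i j : ℕ,
      (∀ p ∈ M, i < (p.1 : ℕ) ∨ (i = (p.1 : ℕ) ∧ j < (p.2 : ℕ))) →
      M.Pairwise (fun p q => (p.1 : ℕ) < (q.1 : ℕ) ∨
        ((p.1 : ℕ) = (q.1 : ℕ) ∧ (p.2 : ℕ) < (q.2 : ℕ))) →
      (∀ s : Equiv.Perm (Fin l),
          ((M.map (fun p => (1 : GA l) - d p • swapElt ℂ p.1 p.2)).prod).coeff s ≠ 0 →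
          ((∀ q : Fin l, (q : ℕ) < i → s q = q) ∧
           (∀ q : Fin l, (q : ℕ) = i →
              s q = q ∨ (j < ((s q : Fin l) : ℕ) ∧ m ≤ ((s q : Fin l) : ℕ)))))
        ∧ theta l m ((M.map (fun p => (1 : GA l) - d p • swapElt ℂ p.1 p.2)).prod) = 1 := by
  intro M
  induction M with
  | nil =>
    intro _ i j _ _
    constructor
    · intro s hs
      have hs1 : s = 1 := by
        by_contra hne
        apply hs
        simp only [List.map_nil, List.prod_nil]
        rw [MonoidAlgebra.one_def, MonoidAlgebra.single_apply, if_neg (fun hh => hne hh.symm)]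
      subst hs1
      exact ⟨fun q _ => rfl, fun q _ => Or.inl rfl⟩
    · simp only [List.map_nil, List.prod_nil]
      exact theta_one
  | cons p M' ih =>
    intro hmix i j hlt hsort
    obtain ⟨hp1, hp2⟩ := hmix p (List.mem_cons_self)
    have hmix' : ∀ q ∈ M', (q.1 : ℕ) < m ∧ m ≤ (q.2 : ℕ) :=
      fun q hq => hmix q (List.mem_cons_of_mem _ hq)
    have hpc := List.pairwise_cons.mp hsort
    obtain ⟨ihsupp, ihtheta⟩ :=
      ih hmix' (p.1 : ℕ) (p.2 : ℕ) hpc.1 hpc.2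
    set P' : GA l := (M'.map (fun p => (1 : GA l) - d p • swapElt ℂ p.1 p.2)).prod with hP'
    have hprodeq : ((p :: M').map (fun p => (1 : GA l) - d p • swapElt ℂ p.1 p.2)).prod
        = ((1 : GA l) - d p • swapElt ℂ p.1 p.2) * P' := by
      rw [List.map_cons, List.prod_cons]
    have hii' : i ≤ (p.1 : ℕ) := by
      rcases hlt p (List.mem_cons_self) with h' | ⟨h', _⟩ <;> omega
    constructor
    · intro s hs
      rw [hprodeq] at hs
      have hcases : P'.coeff s ≠ 0 ∨ P'.coeff (Equiv.swap p.1 p.2 * s) ≠ 0 := by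
        by_contra hc
        push_neg at hc
        apply hs
        rw [factor_mul_apply, hc.1, hc.2, mul_zero, sub_zero]
      rcases hcases with h | h
      · obtain ⟨A', B'⟩ := ihsupp s h
        constructor
        · intro q hq
          exact A' q (by omega)
        · intro q hq
          rcases hlt p (List.mem_cons_self) with h' | ⟨h', hj⟩
          · exact Or.inl (A' q (by omega))
          · rcases B' q (by omega) with h'' | ⟨hb1, hb2⟩
            · exact Or.inl h''
            · exact Or.inr ⟨by omega, hb2⟩
      · set s₂ := Equiv.swap p.1 p.2 * s with hs₂def
        obtain ⟨A', B'⟩ := ihsupp s₂ h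
        have happ : ∀ q, s q = Equiv.swap p.1 p.2 (s₂ q) := by
          intro q
          rw [hs₂def]
          simp [Equiv.Perm.mul_apply, Equiv.swap_apply_self]
        constructor
        · intro q hq
          rw [happ, A' q (by omega)]
          exact Equiv.swap_apply_of_ne_of_ne
            (Fin.ne_of_val_ne (by omega)) (Fin.ne_of_val_ne (by omega))
        · intro q hq
          rcases hlt p (List.mem_cons_self) with h' | ⟨h', hj⟩
          · rw [happ, A' q (by omega)]
            exact Or.inl (Equiv.swap_apply_of_ne_of_ne
              (Fin.ne_of_val_ne (by omega)) (Fin.ne_of_val_ne (by omega)))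
          · have hqp : q = p.1 := Fin.ext (by omega)
            rcases B' q (by omega) with h'' | ⟨hb1, hb2⟩
            · rw [happ, h'', hqp, Equiv.swap_apply_left]
              exact Or.inr ⟨by omega, by omega⟩
            · rw [happ]
              rw [Equiv.swap_apply_of_ne_of_ne
                (Fin.ne_of_val_ne (by omega)) (Fin.ne_of_val_ne (by omega))]
              exact Or.inr ⟨by omega, by omega⟩
    · rw [hprodeq]
      have heq : ((1 : GA l) - d p • swapElt ℂ p.1 p.2) * P'
          = P' - MonoidAlgebra.single (Equiv.swap p.1 p.2) (d p) * P' := by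
        rw [sub_mul, one_mul, swapElt_smul]
      rw [heq, theta_sub, ihtheta]
      have hz : theta l m (MonoidAlgebra.single (Equiv.swap p.1 p.2) (d p) * P') = 0 := by
        ext u
        rw [theta_apply']
        by_cases hPres : Pres l m u
        · rw [if_pos hPres, MonoidAlgebra.single_mul_apply, Equiv.swap_inv]
          have hz2 : P'.coeff (Equiv.swap p.1 p.2 * u) = 0 := by
            by_contra hne
            obtain ⟨A', B'⟩ := ihsupp _ hne
            have happ : u p.1 = Equiv.swap p.1 p.2 ((Equiv.swap p.1 p.2 * u) p.1) := by
              simp [Equiv.Perm.mul_apply, Equiv.swap_apply_self]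
            have hbad : m ≤ ((u p.1 : Fin l) : ℕ) := by
              rcases B' p.1 rfl with h'' | ⟨hb1, hb2⟩
              · rw [happ, h'', Equiv.swap_apply_left]
                exact hp2
              · rw [happ, Equiv.swap_apply_of_ne_of_ne
                  (Fin.ne_of_val_ne (by omega)) (Fin.ne_of_val_ne (by omega))]
                exact hb2
            have := hPres p.1 hp1
            omega
          rw [hz2, mul_zero]
          rfl
        · rw [if_neg hPres]
          rfl
      rw [hz, sub_zero]

/-- Support of products of factors with "preserving" swaps is preserving. -/
lemma prod_pres (d : Fin l × Fin l → ℂ) :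
    ∀ M : List (Fin l × Fin l),
      (∀ p ∈ M, Pres l m (Equiv.swap p.1 p.2)) →
      ∀ s : Equiv.Perm (Fin l),
        ((M.map (fun p => (1 : GA l) - d p • swapElt ℂ p.1 p.2)).prod).coeff s ≠ 0 →
        Pres l m s := by
  intro M
  induction M with
  | nil =>
    intro _ s hs
    have hs1 : s = 1 := by
      by_contra hne
      apply hs
      simp only [List.map_nil, List.prod_nil]
      rw [MonoidAlgebra.one_def, MonoidAlgebra.single_apply, if_neg (fun hh => hne hh.symm)]
    subst hs1
    exact pres_one
  | cons p M' ih =>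
    intro hM s hs
    rw [List.map_cons, List.prod_cons] at hs
    have hσ := hM p (List.mem_cons_self)
    have hM' : ∀ q ∈ M', Pres l m (Equiv.swap q.1 q.2) :=
      fun q hq => hM q (List.mem_cons_of_mem _ hq)
    by_contra hns
    apply hs
    rw [factor_mul_apply]
    have h1 : (M'.map (fun p => (1 : GA l) - d p • swapElt ℂ p.1 p.2)).prod.coeff s = 0 := by
      by_contra h
      exact hns (ih hM' s h)
    have h2 : (M'.map (fun p => (1 : GA l) - d p • swapElt ℂ p.1 p.2)).prod.coeff
        (Equiv.swap p.1 p.2 * s) = 0 := by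
      by_contra h
      have hpres2 := ih hM' _ h
      have : Pres l m s := by
        have := pres_mul hσ hpres2
        have heq : Equiv.swap p.1 p.2 * (Equiv.swap p.1 p.2 * s) = s := by
          rw [← mul_assoc, Equiv.swap_mul_self, one_mul]
        rwa [heq] at this
      exact hns this
    rw [h1, h2, mul_zero, sub_zero]

lemma swap_mul_swap_comm {i j i' j' : Fin l} (h1 : i ≠ i') (h2 : i ≠ j')
    (h3 : j ≠ i') (h4 : j ≠ j') :
    Equiv.swap i j * Equiv.swap i' j' = Equiv.swap i' j' * Equiv.swap i j := by
  have hd : (Equiv.swap i j).Disjoint (Equiv.swap i' j') := by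
    intro x
    by_cases hx : x = i ∨ x = j
    · right
      rcases hx with rfl | rfl
      · exact Equiv.swap_apply_of_ne_of_ne h1 h2
      · exact Equiv.swap_apply_of_ne_of_ne h3 h4
    · left
      push_neg at hx
      exact Equiv.swap_apply_of_ne_of_ne hx.1 hx.2
  exact hd.commute.eq

lemma commute_factor {i j i' j' : Fin l} (c c' : ℂ)
    (h : Equiv.swap i j * Equiv.swap i' j' = Equiv.swap i' j' * Equiv.swap i j) :
    Commute ((1 : GA l) - c • swapElt ℂ i j) ((1 : GA l) - c' • swapElt ℂ i' j') := by
  have hsw : Commute (swapElt ℂ i j) (swapElt ℂ i' j') := by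
    show swapElt ℂ i j * swapElt ℂ i' j' = swapElt ℂ i' j' * swapElt ℂ i j
    rw [swapElt, swapElt, MonoidAlgebra.of_apply, MonoidAlgebra.of_apply,
      MonoidAlgebra.single_mul_single, MonoidAlgebra.single_mul_single, h]
  have h1 : Commute ((1 : GA l) - c • swapElt ℂ i j) (swapElt ℂ i' j') :=
    (Commute.one_left _).sub_left (hsw.smul_left c)
  exact (Commute.one_right _).sub_right (h1.smul_right c')

/-- Splitting an ordered product along a predicate, given suitable commutation. -/
lemma prod_split {α : Type*} {Mo : Type*} [Monoid Mo] (f : α → Mo) (P : α → Bool) :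
    ∀ L : List α,
      L.Pairwise (fun p q => P q = true → P p = false → Commute (f p) (f q)) →
      (L.map f).prod = ((L.filter P).map f).prod * ((L.filter (fun a => !P a)).map f).prod := by
  intro L
  induction L with
  | nil => intro _; simp
  | cons a L ih =>
    intro hpw
    obtain ⟨h1, h2⟩ := List.pairwise_cons.mp hpw
    by_cases hPa : P a = true
    · rw [List.filter_cons_of_pos hPa, List.filter_cons_of_neg (by simp [hPa]),
        List.map_cons, List.prod_cons, List.map_cons, List.prod_cons, ih h2, mul_assoc]
    · have hPa' : P a = false := Bool.not_eq_true _ ▸ hPa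
      have hcomm : Commute (f a) (((L.filter P).map f).prod) := by
        apply Commute.list_prod_right
        intro y hy
        obtain ⟨q, hq, rfl⟩ := List.mem_map.mp hy
        exact h1 q (List.mem_of_mem_filter hq) (List.of_mem_filter hq) hPa'
      rw [List.filter_cons_of_neg (by simp [hPa']), List.filter_cons_of_pos (by simp [hPa']),
        List.map_cons, List.prod_cons, List.map_cons, List.prod_cons, ih h2,
        ← mul_assoc, hcomm.eq, mul_assoc]

lemma pairwise_product {α β : Type*} {R : α × β → α × β → Prop} :
    ∀ (l₁ : List α) (l₂ : List β),
      l₁.Pairwise (fun a b => ∀ x y, R (a, x) (b, y)) →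
      (∀ a, l₂.Pairwise (fun x y => R (a, x) (a, y))) →
      (l₁.product l₂).Pairwise R := by
  intro l₁
  induction l₁ with
  | nil => intro l₂ _ _; simp [List.product]
  | cons a l₁ ih =>
    intro l₂ h1 h2
    show ((a :: l₁) ×ˢ l₂).Pairwise R
    rw [List.product_cons, List.pairwise_append]
    obtain ⟨ha, h1'⟩ := List.pairwise_cons.mp h1
    refine ⟨List.pairwise_map.mpr (h2 a), ih l₂ h1' h2, ?_⟩
    intro x hx y hy
    obtain ⟨x', _, rfl⟩ := List.mem_map.mp hx
    have hy' := List.mem_product.mp hy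
    have := ha y.1 hy'.1 x' y.2
    simpa using this

lemma lexPairs_pairwise (n : ℕ) :
    (lexPairs n).Pairwise (fun p q : Fin n × Fin n =>
      (p.1 : ℕ) < (q.1 : ℕ) ∨ ((p.1 : ℕ) = (q.1 : ℕ) ∧ (p.2 : ℕ) < (q.2 : ℕ))) := by
  unfold lexPairs
  apply List.Pairwise.filter
  apply pairwise_product
  · refine (List.pairwise_lt_finRange n).imp ?_
    intro a b hab x y
    exact Or.inl hab
  · intro a
    refine (List.pairwise_lt_finRange n).imp ?_
    intro x y hxy
    exact Or.inr ⟨rfl, hxy⟩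

lemma mem_lexPairs_lt {n : ℕ} {p : Fin n × Fin n} (hp : p ∈ lexPairs n) :
    (p.1 : ℕ) < (p.2 : ℕ) := by
  unfold lexPairs at hp
  have := (List.mem_filter.mp hp).2
  exact of_decide_eq_true this

end Statement4Aux


theorem statement_4 (l : ℕ) (lam : ℕ → ℕ) (hlam : IsPartitionOf l lam)
    (T : SkewStdTableau l (fun _ => 0) lam) (m : ℕ) (hm : m < l)
    (t : Fin l → ℂ)
    (ht : ∀ i j : Fin l, i < j →
      ((T.content i : ℂ) + t i) - ((T.content j : ℂ) + t j) ≠ 0) :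
    theta l m (((lexPairs l).map (fun p =>
        cFactor p.1 p.2 ((T.content p.1 : ℂ) + t p.1) ((T.content p.2 : ℂ) + t p.2))).prod)
    = (((lexPairs l).filter (fun p => (p.2 : ℕ) < m)).map (fun p =>
        cFactor p.1 p.2 ((T.content p.1 : ℂ) + t p.1) ((T.content p.2 : ℂ) + t p.2))).prod *
      (((lexPairs l).filter (fun p => m ≤ (p.1 : ℕ))).map (fun p =>
        cFactor p.1 p.2 ((T.content p.1 : ℂ) + t p.1) ((T.content p.2 : ℂ) + t p.2))).prod := by
  classical
  set d : Fin l × Fin l → ℂ :=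
    fun p => (((T.content p.1 : ℂ) + t p.1) - ((T.content p.2 : ℂ) + t p.2))⁻¹ with hd
  have hgd : (fun p : Fin l × Fin l => cFactor p.1 p.2
        ((T.content p.1 : ℂ) + t p.1) ((T.content p.2 : ℂ) + t p.2))
      = fun p : Fin l × Fin l => (1 : GA l) - d p • swapElt ℂ p.1 p.2 := rfl
  rw [hgd]
  set f : Fin l × Fin l → GA l :=
    fun p : Fin l × Fin l => (1 : GA l) - d p • swapElt ℂ p.1 p.2 with hf
  -- Step 1: split off the pairs with both entries < m
  have hpw1 : (lexPairs l).Pairwise (fun p q =>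
      (decide ((q.2 : ℕ) < m)) = true → (decide ((p.2 : ℕ) < m)) = false →
      Commute (f p) (f q)) := by
    have hbase := List.Pairwise.and_mem.mp (lexPairs_pairwise l)
    refine hbase.imp ?_
    rintro p q ⟨hpmem, hqmem, hlex⟩ hq hp
    have hq' : (q.2 : ℕ) < m := of_decide_eq_true hq
    have hp' : ¬((p.2 : ℕ) < m) := of_decide_eq_false hp
    have h12p := mem_lexPairs_lt hpmem
    have h12q := mem_lexPairs_lt hqmem
    have hlt1 : (p.1 : ℕ) < (q.1 : ℕ) := by
      rcases hlex with h | ⟨h1, h2⟩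
      · exact h
      · omega
    exact commute_factor _ _ (swap_mul_swap_comm
      (Fin.ne_of_val_ne (by omega)) (Fin.ne_of_val_ne (by omega))
      (Fin.ne_of_val_ne (by omega)) (Fin.ne_of_val_ne (by omega)))
  rw [prod_split f (fun p => decide ((p.2 : ℕ) < m)) (lexPairs l) hpw1]
  -- Step 2: split the remaining pairs into mixed and high pairs
  have hpw2 : ((lexPairs l).filter (fun a => !(decide ((a.2 : ℕ) < m)))).Pairwise
      (fun p q => (decide ((q.1 : ℕ) < m)) = true → (decide ((p.1 : ℕ) < m)) = false →
        Commute (f p) (f q)) := by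
    refine ((lexPairs_pairwise l).filter _).imp ?_
    intro p q hlex hq hp
    exfalso
    have hq' : (q.1 : ℕ) < m := of_decide_eq_true hq
    have hp' : ¬((p.1 : ℕ) < m) := of_decide_eq_false hp
    rcases hlex with h | ⟨h1, _⟩ <;> omega
  rw [prod_split f (fun p => decide ((p.1 : ℕ) < m)) _ hpw2]
  -- identify the list of high pairs
  have hC : ((lexPairs l).filter (fun a => !(decide ((a.2 : ℕ) < m)))).filter
        (fun a => !(decide ((a.1 : ℕ) < m)))
      = (lexPairs l).filter (fun p => decide (m ≤ (p.1 : ℕ))) := by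
    rw [List.filter_filter]
    apply List.filter_congr
    intro a ha
    have h12 := mem_lexPairs_lt ha
    by_cases h : m ≤ (a.1 : ℕ)
    · have h1 : ¬((a.1 : ℕ) < m) := by omega
      have h2 : ¬((a.2 : ℕ) < m) := by omega
      simp [h, h1, h2]
    · have h1 : (a.1 : ℕ) < m := by omega
      simp [h, h1]
  rw [hC]
  -- the mixed pairs
  set M0 : List (Fin l × Fin l) :=
    ((lexPairs l).filter (fun a => !(decide ((a.2 : ℕ) < m)))).filter
      (fun p => decide ((p.1 : ℕ) < m)) with hM0
  have hmixmem : ∀ p ∈ M0, (p.1 : ℕ) < m ∧ m ≤ (p.2 : ℕ) := by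
    intro p hp
    have h1 := List.mem_filter.mp hp
    have h2 := List.mem_filter.mp h1.1
    refine ⟨of_decide_eq_true h1.2, ?_⟩
    have h3 : ¬((p.2 : ℕ) < m) := by simpa using h2.2
    omega
  have hlt0 : ∀ p ∈ M0, 0 < (p.1 : ℕ) ∨ (0 = (p.1 : ℕ) ∧ 0 < (p.2 : ℕ)) := by
    intro p hp
    obtain ⟨h1, h2⟩ := hmixmem p hp
    by_cases h : (p.1 : ℕ) = 0
    · exact Or.inr ⟨h.symm, by omega⟩
    · exact Or.inl (by omega)
  have hsort0 : M0.Pairwise (fun p q : Fin l × Fin l => (p.1 : ℕ) < (q.1 : ℕ) ∨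
      ((p.1 : ℕ) = (q.1 : ℕ) ∧ (p.2 : ℕ) < (q.2 : ℕ))) :=
    ((lexPairs_pairwise l).filter _).filter _
  obtain ⟨-, hthetaM⟩ := mixed_main d M0 hmixmem 0 0 hlt0 hsort0
  -- support conditions for the outer factors
  have hApres : ∀ s ∈ ((((lexPairs l).filter (fun p => decide ((p.2 : ℕ) < m))).map f).prod).coeff.support,
      Pres l m s := by
    intro s hs
    refine prod_pres d _ ?_ s (Finsupp.mem_support_iff.mp hs)
    intro p hp
    have h1 := List.mem_filter.mp hp
    have h2 : (p.2 : ℕ) < m := of_decide_eq_true h1.2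
    have h12 := mem_lexPairs_lt h1.1
    exact pres_swap_lt (by omega) h2
  have hCpres : ∀ s ∈ ((((lexPairs l).filter (fun p => decide (m ≤ (p.1 : ℕ)))).map f).prod).coeff.support,
      Pres l m s := by
    intro s hs
    refine prod_pres d _ ?_ s (Finsupp.mem_support_iff.mp hs)
    intro p hp
    have h1 := List.mem_filter.mp hp
    have h2 : m ≤ (p.1 : ℕ) := of_decide_eq_true h1.2
    have h12 := mem_lexPairs_lt h1.1
    exact pres_swap_ge h2 (by omega)
  rw [theta_mul_left _ _ hApres, theta_mul_right _ _ hCpres, hthetaM, one_mul]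

end
end

section
/- Let l ≥ 1 and m ∈ {0,…,l−1}. Let γ_m : ℂS_{l+1} → ℂS_{l+1} be the linear map with γ_m(s) = s if s(1) ∉ {2,…,m+1}, and γ_m(s) = 0 otherwise. Then for any z_1,…,z_l ∈ ℂ, with f_{1,k}(x,z) = 1 − (1 k)/(x−z), the equality γ_m( f_{1,l+1}(x,z_l) f_{1,l}(x,z_{l−1}) ⋯ f_{12}(x,z_1) ) = f_{1,l+1}(x,z_l) ⋯ f_{1,m+2}(x,z_{m+1}) holds as an identity of ℂS_{l+1}-valued rational functions of x. -/
open scoped BigOperators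
open scoped Classical
open Matrix

noncomputable section

namespace Statement5Aux

open scoped Pointwise

lemma gammaMap_add (l m : ℕ) (a b : GA (l+1)) :
    gammaMap l m (a + b) = gammaMap l m a + gammaMap l m b := by
  unfold gammaMap
  rw [← Finset.sum_add_distrib]
  refine Finset.sum_congr rfl fun s _ => ?_
  split
  · rw [MonoidAlgebra.coeff_add, Finsupp.add_apply]
    exact MonoidAlgebra.single_add s (a.coeff s) (b.coeff s)
  · simp

lemma gammaMap_eq_self {l m : ℕ} {a : GA (l+1)}
    (h : ∀ s ∈ a.coeff.support, (s 0 = 0 ∨ m < ((s 0 : Fin (l+1)) : ℕ))) :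
    gammaMap l m a = a := by
  unfold gammaMap
  have step : ∀ s : Equiv.Perm (Fin (l+1)),
      (if (s 0 = 0 ∨ m < ((s 0 : Fin (l+1)) : ℕ))
        then (MonoidAlgebra.single s (a.coeff s) : GA (l+1)) else 0)
        = MonoidAlgebra.single s (a.coeff s) := by
    intro s
    by_cases hc : (s 0 = 0 ∨ m < ((s 0 : Fin (l+1)) : ℕ))
    · rw [if_pos hc]
    · rw [if_neg hc]
      have ha : a.coeff s = 0 := by
        by_contra hne
        exact hc (h s (Finsupp.mem_support_iff.mpr hne))
      rw [ha, MonoidAlgebra.single_zero]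
  rw [Finset.sum_congr rfl (fun s _ => step s)]
  apply MonoidAlgebra.coeff_injective
  rw [MonoidAlgebra.coeff_sum]
  simp only [MonoidAlgebra.coeff_single]
  exact Finsupp.univ_sum_single a.coeff

lemma gammaMap_eq_zero {l m : ℕ} {a : GA (l+1)}
    (h : ∀ s ∈ a.coeff.support, ¬(s 0 = 0 ∨ m < ((s 0 : Fin (l+1)) : ℕ))) :
    gammaMap l m a = 0 := by
  unfold gammaMap
  refine Finset.sum_eq_zero fun s _ => ?_
  by_cases hc : (s 0 = 0 ∨ m < ((s 0 : Fin (l+1)) : ℕ))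
  · rw [if_pos hc]
    have ha : a.coeff s = 0 := by
      by_contra hne
      exact h s (Finsupp.mem_support_iff.mpr hne) hc
    rw [ha]
    exact MonoidAlgebra.single_zero s
  · rw [if_neg hc]

lemma support_factor {l : ℕ} (w : ℂ) (σ : Equiv.Perm (Fin (l+1))) :
    ((1 : GA (l+1)) - w • MonoidAlgebra.of ℂ _ σ).coeff.support ⊆ {1, σ} := by
  rw [MonoidAlgebra.coeff_sub]
  refine (Finsupp.support_sub).trans ?_
  apply Finset.union_subset
  · rw [MonoidAlgebra.one_def, MonoidAlgebra.coeff_single]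
    exact (Finsupp.support_single_subset).trans (by simp)
  · rw [MonoidAlgebra.coeff_smul]
    refine (Finsupp.support_smul).trans ?_
    rw [MonoidAlgebra.of_apply, MonoidAlgebra.coeff_single]
    exact (Finsupp.support_single_subset).trans (by simp)

/-- Support of products of the large factors fixes `{1,…,m}` pointwise. -/
lemma supp_prod_fix {l : ℕ} (m : ℕ) (z : Fin l → ℂ) (x : ℂ) (L : List (Fin l))
    (hL : ∀ k ∈ L, m ≤ (k : ℕ)) :
    ∀ s ∈ ((L.map (fun k =>
        (1 : GA (l + 1)) - (x - z k)⁻¹ • swapElt ℂ 0 k.succ)).prod).coeff.support,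
      ∀ j : Fin (l+1), 1 ≤ (j : ℕ) → (j : ℕ) ≤ m → s j = j := by
  induction L with
  | nil =>
    intro s hs
    simp only [List.map_nil, List.prod_nil] at hs
    rw [MonoidAlgebra.one_def, MonoidAlgebra.coeff_single] at hs
    have := Finsupp.support_single_subset hs
    simp only [Finset.mem_singleton] at this
    subst this
    intro j _ _
    rfl
  | cons k L ih =>
    intro s hs j hj1 hj2
    rw [List.map_cons, List.prod_cons] at hs
    have hsub := MonoidAlgebra.support_coeff_mul_subset _ _ hs
    rw [Finset.mem_mul] at hsub
    obtain ⟨a, ha, b, hb, rfl⟩ := hsub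
    have hbj : b j = j := ih (fun k hk => hL k (List.mem_cons_of_mem _ hk)) b hb j hj1 hj2
    have haj : a j = j := by
      have ha2 := support_factor ((x - z k)⁻¹) (Equiv.swap 0 k.succ) ha
      simp only [Finset.mem_insert, Finset.mem_singleton] at ha2
      rcases ha2 with rfl | rfl
      · rfl
      · have hm := hL k List.mem_cons_self
        refine Equiv.swap_apply_of_ne_of_ne ?_ ?_
        · intro h; rw [h] at hj1; simp at hj1
        · intro h
          rw [h] at hj2
          simp only [Fin.val_succ] at hj2
          omega
    calc (a * b) j = a (b j) := rfl
    _ = a j := by rw [hbj]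
    _ = j := haj

/-- Structure of products of the small factors. -/
lemma prod_small {l : ℕ} (z : Fin l → ℂ) (x : ℂ) :
    ∀ (L : List (Fin l)), L.Pairwise (fun a b : Fin l => (b : ℕ) < (a : ℕ)) →
    ∀ b : ℕ, (∀ k ∈ L, (k : ℕ) < b) →
    ∃ R : GA (l+1),
      (L.map (fun k =>
        (1 : GA (l + 1)) - (x - z k)⁻¹ • swapElt ℂ 0 k.succ)).prod = 1 + R
      ∧ ∀ t ∈ R.coeff.support, 1 ≤ ((t 0 : Fin (l+1)) : ℕ) ∧ ((t 0 : Fin (l+1)) : ℕ) ≤ b := by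
  intro L
  induction L with
  | nil => intro _ b _; exact ⟨0, by simp, by simp⟩
  | cons k L ih =>
    intro hp b hb
    obtain ⟨hk, hp'⟩ := List.pairwise_cons.mp hp
    obtain ⟨R', hR', hsupp'⟩ := ih hp' (k : ℕ) (fun j hj => hk j hj)
    have hkb : (k : ℕ) < b := hb k List.mem_cons_self
    set σ := Equiv.swap (0 : Fin (l+1)) k.succ with hσ
    set c : GA (l+1) := (x - z k)⁻¹ • swapElt ℂ 0 k.succ with hc
    have hcsupp : c.coeff.support ⊆ {σ} := by
      rw [hc, MonoidAlgebra.coeff_smul]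
      refine (Finsupp.support_smul).trans ?_
      rw [swapElt, MonoidAlgebra.of_apply, MonoidAlgebra.coeff_single]
      exact Finsupp.support_single_subset
    refine ⟨R' - (c + c * R'), ?_, ?_⟩
    · rw [List.map_cons, List.prod_cons, hR']
      rw [sub_mul, one_mul, mul_add, mul_one]
      abel
    · intro t ht
      rw [MonoidAlgebra.coeff_sub] at ht
      have ht2 := Finsupp.support_sub ht
      rw [Finset.mem_union] at ht2
      rcases ht2 with ht2 | ht2
      · obtain ⟨h1, h2⟩ := hsupp' t ht2
        exact ⟨h1, by omega⟩
      · rw [MonoidAlgebra.coeff_add] at ht2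
        have ht3 := Finsupp.support_add ht2
        rw [Finset.mem_union] at ht3
        rcases ht3 with ht3 | ht3
        · have := hcsupp ht3
          simp only [Finset.mem_singleton] at this
          subst this
          constructor
          · rw [hσ, Equiv.swap_apply_left, Fin.val_succ]; omega
          · rw [hσ, Equiv.swap_apply_left, Fin.val_succ]; omega
        · have hsub := MonoidAlgebra.support_coeff_mul_subset _ _ ht3
          rw [Finset.mem_mul] at hsub
          obtain ⟨a, ha, r, hr, rfl⟩ := hsub
          have := hcsupp ha
          simp only [Finset.mem_singleton] at this
          subst this
          obtain ⟨hr1, hr2⟩ := hsupp' r hr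
          have : (σ * r) 0 = r 0 := by
            show σ (r 0) = r 0
            refine Equiv.swap_apply_of_ne_of_ne ?_ ?_
            · intro h; rw [h] at hr1; simp at hr1
            · intro h; rw [h, Fin.val_succ] at hr2; omega
          rw [this]
          exact ⟨hr1, by omega⟩

lemma range_split (l m : ℕ) (h : m ≤ l) :
    List.range l = (List.range l).filter (fun x => x < m)
      ++ (List.range l).filter (fun x => m ≤ x) := by
  conv_lhs => rw [show l = m + (l - m) by omega, List.range_add]
  rw [show l = m + (l - m) by omega, List.range_add]
  rw [List.filter_append, List.filter_append]
  have h1 : (List.range m).filter (fun x => decide (x < m)) = List.range m :=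
    List.filter_eq_self.mpr (fun a ha => by simpa using List.mem_range.mp ha)
  have h2 : ((List.range (l-m)).map (m + ·)).filter (fun x => decide (x < m)) = [] := by
    apply List.filter_eq_nil_iff.mpr
    intro a ha
    simp only [List.mem_map] at ha
    obtain ⟨c, _, rfl⟩ := ha
    simp
  have h3 : (List.range m).filter (fun x => decide (m ≤ x)) = [] := by
    apply List.filter_eq_nil_iff.mpr
    intro a ha
    have := List.mem_range.mp ha
    simp
    omega
  have h4 : ((List.range (l-m)).map (m + ·)).filter (fun x => decide (m ≤ x))
      = (List.range (l-m)).map (m + ·) := by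
    apply List.filter_eq_self.mpr
    intro a ha
    simp only [List.mem_map] at ha
    obtain ⟨c, _, rfl⟩ := ha
    simp
  rw [h1, h2, h3, h4, List.append_nil, List.nil_append, Nat.add_sub_cancel_left]

lemma map_coe_finRange (l : ℕ) : (List.finRange l).map Fin.val = List.range l :=
  List.ext_getElem (by simp) (by simp)

lemma finRange_split (l m : ℕ) (h : m ≤ l) :
    List.finRange l = (List.finRange l).filter (fun k : Fin l => (k : ℕ) < m)
      ++ (List.finRange l).filter (fun k : Fin l => m ≤ (k : ℕ)) := by
  apply List.map_injective_iff.mpr Fin.val_injective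
  rw [List.map_append]
  have e1 : List.map Fin.val ((List.finRange l).filter (fun k : Fin l => (k : ℕ) < m))
      = (List.range l).filter (fun x => x < m) := by
    rw [← map_coe_finRange l, List.filter_map]; rfl
  have e2 : List.map Fin.val ((List.finRange l).filter (fun k : Fin l => m ≤ (k : ℕ)))
      = (List.range l).filter (fun x => m ≤ x) := by
    rw [← map_coe_finRange l, List.filter_map]; rfl
  rw [e1, e2, map_coe_finRange, ← range_split l m h]

end Statement5Aux


open scoped Pointwise

theorem statement_5 (l : ℕ) (hl : 1 ≤ l) (m : ℕ) (hm : m < l) (z : Fin l → ℂ)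
    (x : ℂ) (hx : ∀ k, x ≠ z k) :
    gammaMap l m
      (((List.finRange l).reverse.map (fun k =>
        (1 : GA (l + 1)) - (x - z k)⁻¹ • swapElt ℂ 0 k.succ)).prod)
    = (((List.finRange l).filter (fun k : Fin l => m ≤ (k : ℕ))).reverse.map (fun k =>
        (1 : GA (l + 1)) - (x - z k)⁻¹ • swapElt ℂ 0 k.succ)).prod := by
  classical
  set f : Fin l → GA (l+1) :=
    fun k => (1 : GA (l + 1)) - (x - z k)⁻¹ • swapElt ℂ 0 k.succ with hf
  set A : List (Fin l) := (List.finRange l).filter (fun k : Fin l => (k : ℕ) < m) with hA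
  set B : List (Fin l) := (List.finRange l).filter (fun k : Fin l => m ≤ (k : ℕ)) with hB
  have hsplit : List.finRange l = A ++ B := Statement5Aux.finRange_split l m hm.le
  conv_lhs => rw [hsplit]
  rw [List.reverse_append, List.map_append, List.prod_append]
  set Q : GA (l+1) := (B.reverse.map f).prod with hQ
  -- structure of the small product
  have hpair : (A.reverse).Pairwise (fun a b : Fin l => (b : ℕ) < (a : ℕ)) := by
    rw [List.pairwise_reverse]
    exact ((List.pairwise_lt_finRange l).filter _).imp (fun h => h)
  have hbound : ∀ k ∈ A.reverse, (k : ℕ) < m := by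
    intro k hk
    rw [List.mem_reverse, hA, List.mem_filter] at hk
    simpa using hk.2
  obtain ⟨R, hT, hRsupp⟩ := Statement5Aux.prod_small z x A.reverse hpair m hbound
  rw [hT, mul_add, mul_one]
  -- support of Q fixes {1,…,m} pointwise
  have hfixB : ∀ k ∈ B.reverse, m ≤ (k : ℕ) := by
    intro k hk
    rw [List.mem_reverse, hB, List.mem_filter] at hk
    simpa using hk.2
  have hfix := Statement5Aux.supp_prod_fix m z x B.reverse hfixB
  rw [Statement5Aux.gammaMap_add]
  have h1 : gammaMap l m Q = Q := by
    apply Statement5Aux.gammaMap_eq_self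
    intro s hs
    by_cases h0 : s 0 = 0
    · exact Or.inl h0
    · right
      by_contra hlt
      push_neg at hlt
      have h1le : 1 ≤ ((s 0 : Fin (l+1)) : ℕ) :=
        Nat.one_le_iff_ne_zero.mpr (fun hh => h0 (Fin.ext (by simpa using hh)))
      have hss := hfix s hs (s 0) h1le hlt
      exact h0 (s.injective hss)
  have h2 : gammaMap l m (Q * R) = 0 := by
    apply Statement5Aux.gammaMap_eq_zero
    intro s hs
    have hsub := MonoidAlgebra.support_coeff_mul_subset _ _ hs
    rw [Finset.mem_mul] at hsub
    obtain ⟨q, hq, r, hr, rfl⟩ := hsub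
    obtain ⟨hr1, hr2⟩ := hRsupp r hr
    have h1le : 1 ≤ ((r 0 : Fin (l+1)) : ℕ) := hr1
    have heq : (q * r) 0 = r 0 := by
      show q (r 0) = r 0
      exact hfix q hq (r 0) hr1 hr2
    rw [heq]
    rintro (h | h)
    · rw [h] at hr1; simp at hr1
    · omega
  rw [h1, h2, add_zero]

end
end

section
/- Let l ≥ 1 and m ∈ {0,…,l−1}. Let γ'_m : ℂS_{l+1} → ℂS_{l+1} be the linear map with γ'_m(s) = s if s^{-1}(1) ∉ {2,…,m+1}, and γ'_m(s) = 0 otherwise. Then for any z_1,…,z_l ∈ ℂ, with f_{1,k}(x,z) = 1 − (1 k)/(x−z), the equality γ'_m( f_{12}(x,z_1) f_{13}(x,z_2) ⋯ f_{1,l+1}(x,z_l) ) = f_{1,m+2}(x,z_{m+1}) ⋯ f_{1,l+1}(x,z_l) holds as an identity of ℂS_{l+1}-valued rational functions of x. -/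
open scoped BigOperators
open scoped Classical
open Matrix

noncomputable section

section Aux6

variable {l : ℕ}

lemma gammaMap'_apply (m : ℕ) (a : GA (l + 1)) (t : Equiv.Perm (Fin (l + 1))) :
    (gammaMap' l m a).coeff t =
      if (t⁻¹ 0 = 0 ∨ m < ((t⁻¹ 0 : Fin (l + 1)) : ℕ)) then a.coeff t else 0 := by
  classical
  unfold gammaMap'
  rw [MonoidAlgebra.coeff_sum, Finset.sum_apply']
  rw [Finset.sum_eq_single t]
  · split <;> simp [MonoidAlgebra.coeff_single, Finsupp.single_apply]
  · intro s _ hs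
    split <;> simp [MonoidAlgebra.coeff_single, Finsupp.single_apply, hs]
  · simp

lemma factor_mul_apply_s6 (c : ℂ) (g : Equiv.Perm (Fin (l + 1))) (hg : g⁻¹ = g)
    (b : GA (l + 1)) (t : Equiv.Perm (Fin (l + 1))) :
    (((1 : GA (l + 1)) - c • (MonoidAlgebra.of ℂ _ g)) * b).coeff t = b.coeff t - c * b.coeff (g * t) := by
  rw [sub_mul, one_mul, smul_mul_assoc, MonoidAlgebra.coeff_sub, Finsupp.sub_apply,
    MonoidAlgebra.coeff_smul, Finsupp.smul_apply,
    MonoidAlgebra.of_apply, MonoidAlgebra.coeff_single_mul_apply, hg, one_mul, smul_eq_mul]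

lemma support_prod_fix (c : Fin l → ℂ) (L : List (Fin l)) (i : Fin (l + 1))
    (hi0 : i ≠ 0) (hiL : ∀ k ∈ L, i ≠ k.succ) :
    ∀ w : Equiv.Perm (Fin (l + 1)),
      ((L.map (fun k => (1 : GA (l + 1)) - c k • swapElt ℂ 0 k.succ)).prod).coeff w ≠ 0 →
        w i = i := by
  induction L with
  | nil =>
      intro w hw
      simp only [List.map_nil, List.prod_nil] at hw
      rw [MonoidAlgebra.one_def, MonoidAlgebra.coeff_single, Finsupp.single_apply] at hw
      have : w = 1 := by
        by_contra h
        exact hw (by simp [Ne.symm h])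
      simp [this]
  | cons k L ih =>
      intro w hw
      simp only [List.map_cons, List.prod_cons] at hw
      rw [swapElt, factor_mul_apply_s6 _ _ (Equiv.swap_inv 0 k.succ)] at hw
      have hik : i ≠ k.succ := hiL k List.mem_cons_self
      have hiL' : ∀ k' ∈ L, i ≠ k'.succ := fun k' hk' => hiL k' (List.mem_cons_of_mem k hk')
      by_cases h1 : ((L.map (fun k => (1 : GA (l + 1)) - c k • swapElt ℂ 0 k.succ)).prod).coeff w ≠ 0
      · exact ih hiL' w h1
      · push_neg at h1
        have h2 : ((L.map (fun k => (1 : GA (l + 1)) - c k • swapElt ℂ 0 k.succ)).prod).coeff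
            (Equiv.swap 0 k.succ * w) ≠ 0 := by
          intro h2
          rw [h1, h2] at hw
          simp at hw
        have h3 := ih hiL' _ h2
        have h4 : Equiv.swap 0 k.succ (w i) = i := h3
        have h5 : w i = Equiv.swap 0 k.succ i := by
          have := congrArg (Equiv.swap 0 k.succ) h4
          rwa [Equiv.swap_apply_self] at this
        rw [h5, Equiv.swap_apply_of_ne_of_ne hi0 hik]

lemma gammaMap'_eq_self (m : ℕ) (b : GA (l + 1))
    (hb : ∀ w : Equiv.Perm (Fin (l + 1)), b.coeff w ≠ 0 →
      (w⁻¹ 0 = 0 ∨ m < ((w⁻¹ 0 : Fin (l + 1)) : ℕ))) :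
    gammaMap' l m b = b := by
  ext t
  rw [gammaMap'_apply]
  split_ifs with h
  · rfl
  · by_contra hbt
    exact h (hb t fun h0 => hbt (by rw [h0]))

lemma gammaMap'_factor (m : ℕ) (c : ℂ) (j : Fin (l + 1)) (hj0 : j ≠ 0)
    (hjm : (j : ℕ) ≤ m) (b : GA (l + 1))
    (hb : ∀ w : Equiv.Perm (Fin (l + 1)), b.coeff w ≠ 0 → w j = j) :
    gammaMap' l m (((1 : GA (l + 1)) - c • swapElt ℂ 0 j) * b) = gammaMap' l m b := by
  ext t
  rw [gammaMap'_apply, gammaMap'_apply]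
  split_ifs with h
  · rw [swapElt, factor_mul_apply_s6 _ _ (Equiv.swap_inv 0 j)]
    have hz : b.coeff (Equiv.swap 0 j * t) = 0 := by
      by_contra hnz
      have hw : (Equiv.swap 0 j * t) j = j := hb _ hnz
      set w := Equiv.swap 0 j * t with hwdef
      have ht : t = Equiv.swap 0 j * w := by
        rw [hwdef, ← mul_assoc, Equiv.swap_mul_self, one_mul]
      have hwinv : w⁻¹ j = j := by
        conv_lhs => rw [← hw]
        exact w.symm_apply_apply j
      have htinv : t⁻¹ 0 = j := by
        rw [ht, _root_.mul_inv_rev, Equiv.swap_inv]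
        show w⁻¹ (Equiv.swap 0 j 0) = j
        rw [Equiv.swap_apply_left, hwinv]
      rcases h with h | h
      · rw [htinv] at h; exact hj0 h
      · rw [htinv] at h; omega
    rw [hz, mul_zero, sub_zero]
  · rfl

lemma gammaMap'_append (m : ℕ) (c : Fin l → ℂ) (L₁ L₂ : List (Fin l))
    (h1 : ∀ k ∈ L₁, (k : ℕ) < m) (h2 : ∀ k ∈ L₂, m ≤ (k : ℕ)) (hnd : L₁.Nodup) :
    gammaMap' l m
      ((((L₁ ++ L₂)).map (fun k => (1 : GA (l + 1)) - c k • swapElt ℂ 0 k.succ)).prod)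
    = ((L₂.map (fun k => (1 : GA (l + 1)) - c k • swapElt ℂ 0 k.succ)).prod) := by
  induction L₁ with
  | nil =>
      simp only [List.nil_append]
      apply gammaMap'_eq_self
      intro w hw
      by_cases h0 : w⁻¹ 0 = 0
      · exact Or.inl h0
      · right
        by_contra hle
        push_neg at hle
        set i := w⁻¹ 0 with hi
        have hiL : ∀ k ∈ L₂, i ≠ k.succ := by
          intro k hk heq
          have : (i : ℕ) = (k : ℕ) + 1 := by rw [heq]; simp [Fin.val_succ]
          have := h2 k hk
          omega
        have hwi : w i = i := support_prod_fix c L₂ i h0 hiL w hw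
        have : w i = 0 := w.apply_symm_apply 0
        rw [hwi] at this
        exact h0 this
  | cons k L₁ ih =>
      simp only [List.cons_append, List.map_cons, List.prod_cons]
      have hk0 : (k.succ : Fin (l + 1)) ≠ 0 := by
        simp [Fin.ext_iff]
      have hkm : ((k.succ : Fin (l + 1)) : ℕ) ≤ m := by
        have := h1 k List.mem_cons_self
        simp only [Fin.val_succ]
        omega
      rw [gammaMap'_factor m _ k.succ hk0 hkm]
      · exact ih (fun k' hk' => h1 k' (List.mem_cons_of_mem k hk')) (List.Nodup.of_cons hnd)
      · intro w hw
        apply support_prod_fix c (L₁ ++ L₂) k.succ hk0 _ w hw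
        intro k' hk' heq
        have hkk' : k = k' := by
          have : (k : ℕ) + 1 = (k' : ℕ) + 1 := by
            have := congrArg (Fin.val) heq
            simpa [Fin.val_succ] using this
          exact Fin.ext (by omega)
        rcases List.mem_append.mp hk' with h | h
        · exact (List.nodup_cons.mp hnd).1 (hkk' ▸ h)
        · have := h2 k' h
          have := h1 k List.mem_cons_self
          omega

lemma sorted_filter_split (m : ℕ) (L : List (Fin l)) (hs : List.Pairwise (· < ·) L) :
    L.filter (fun k : Fin l => decide ((k : ℕ) < m))
      ++ L.filter (fun k : Fin l => decide (m ≤ (k : ℕ))) = L := by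
  induction L with
  | nil => simp
  | cons a L ih =>
      rw [List.pairwise_cons] at hs
      by_cases h : (a : ℕ) < m
      · rw [List.filter_cons_of_pos (by simpa using h),
          List.filter_cons_of_neg (by simpa using Nat.not_le.mpr h),
          List.cons_append, ih hs.2]
      · push_neg at h
        rw [List.filter_cons_of_neg (by simpa using Nat.not_lt.mpr h),
          List.filter_cons_of_pos (by simpa using h)]
        have hL1 : L.filter (fun k : Fin l => decide ((k : ℕ) < m)) = [] := by
          apply List.filter_eq_nil_iff.mpr
          intro b hb
          have hab : (a : ℕ) < (b : ℕ) := hs.1 b hb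
          simp only [decide_eq_true_eq]
          omega
        have hL2 : L.filter (fun k : Fin l => decide (m ≤ (k : ℕ))) = L := by
          apply List.filter_eq_self.mpr
          intro b hb
          have hab : (a : ℕ) < (b : ℕ) := hs.1 b hb
          simp only [decide_eq_true_eq]
          omega
        rw [hL1, hL2, List.nil_append]

end Aux6

theorem statement_6 (l : ℕ) (hl : 1 ≤ l) (m : ℕ) (hm : m < l) (z : Fin l → ℂ)
    (x : ℂ) (hx : ∀ k, x ≠ z k) :
    gammaMap' l m
      (((List.finRange l).map (fun k =>
        (1 : GA (l + 1)) - (x - z k)⁻¹ • swapElt ℂ 0 k.succ)).prod)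
    = (((List.finRange l).filter (fun k : Fin l => m ≤ (k : ℕ))).map (fun k =>
        (1 : GA (l + 1)) - (x - z k)⁻¹ • swapElt ℂ 0 k.succ)).prod := by
  classical
  have hsplit := sorted_filter_split m (List.finRange l) (List.pairwise_lt_finRange l)
  have key := gammaMap'_append m (fun k => (x - z k)⁻¹)
    ((List.finRange l).filter (fun k : Fin l => decide ((k : ℕ) < m)))
    ((List.finRange l).filter (fun k : Fin l => decide (m ≤ (k : ℕ))))
    (fun k hk => by simpa using (List.mem_filter.mp hk).2)
    (fun k hk => by simpa using (List.mem_filter.mp hk).2)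
    ((List.nodup_finRange l).filter _)
  rw [hsplit] at key
  convert key using 3

end
end

section
/- Let ℂ^L carry a nondegenerate bilinear form, symmetric or alternating, and let l ≥ 3. For pairwise distinct indices i, j, k ∈ {1,…,l} and complex numbers x, y, z with x+y ≠ 0, x+z ≠ 0 and y ≠ z, the identity \tilde{R}_{ik}(x,z) \tilde{R}_{ij}(x,y) R_{jk}(y,z) = R_{jk}(y,z) \tilde{R}_{ij}(x,y) \tilde{R}_{ik}(x,z) holds for operators on (ℂ^L)^{⊗l}. -/
open scoped BigOperators
open scoped Classical
open Matrix

noncomputable section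

section Aux8

variable {L l : ℕ}

lemma qmat_cond {B : Matrix (Fin L) (Fin L) ℂ} {u v : Fin l} {f g : TIdx L l}
    (h : Qmat B u v f g ≠ 0) : ∀ m, m ≠ u → m ≠ v → g m = f m := by
  intro m hm1 hm2; by_contra hc
  apply h; simp only [Qmat]; rw [if_neg]
  intro hall; exact hc (hall m hm1 hm2)

lemma swapMat_mul_apply (p q : Fin l) (M : TOp ℂ L l) (f g : TIdx L l) :
    (Pmat p q * M : TOp ℂ L l) f g = M (f ∘ Equiv.swap p q) g := by
  rw [Pmat, Matrix.mul_apply, Finset.sum_eq_single (f ∘ ⇑(Equiv.swap p q))]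
  · simp [permMat]
  · intro h _ hne; simp [permMat, hne]
  · simp

lemma mul_swapMat_apply (M : TOp ℂ L l) (p q : Fin l) (f g : TIdx L l) :
    (M * Pmat p q : TOp ℂ L l) f g = M f (g ∘ Equiv.swap p q) := by
  rw [Pmat, Matrix.mul_apply, Finset.sum_eq_single (g ∘ ⇑(Equiv.swap p q))]
  · have h : g = (g ∘ ⇑(Equiv.swap p q)) ∘ ⇑(Equiv.swap p q) := by
      ext m; simp [Equiv.swap_apply_self]
    simp [permMat, ← h]
  · intro h _ hne
    have hg : g ≠ h ∘ ⇑(Equiv.swap p q) := by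
      intro hgs; apply hne; ext m
      simp [hgs, Equiv.swap_apply_self]
    simp [permMat, hg]
  · simp

lemma swapMat_sq (p q : Fin l) : Pmat p q * Pmat p q = (1 : TOp ℂ L l) := by
  ext f g
  rw [swapMat_mul_apply, Pmat]
  have h : (f ∘ ⇑(Equiv.swap p q)) ∘ ⇑(Equiv.swap p q) = f := by
    ext m; simp [Equiv.swap_apply_self]
  simp only [permMat, h, Matrix.one_apply]
  exact if_congr eq_comm rfl rfl

/-- The common value of several products of `Q`'s and `P`'s. -/
def Aaux (B : Matrix (Fin L) (Fin L) ℂ) (i p q : Fin l) : TOp ℂ L l :=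
  fun f g => if (∀ m, m ≠ i → m ≠ p → m ≠ q → g m = f m) ∧ g p = f q
    then B⁻¹ (f p) (f i) * B (g i) (g q) else 0

lemma qmat_mul_qmat (B : Matrix (Fin L) (Fin L) ℂ) (hB : B⁻¹ * B = 1)
    (i p q : Fin l) (hip : i ≠ p) (hiq : i ≠ q) (hpq : p ≠ q) :
    Qmat B i p * Qmat B i q = Aaux B i p q := by
  ext f g
  rw [Matrix.mul_apply]
  by_cases hC : ∀ m, m ≠ i → m ≠ p → m ≠ q → g m = f m
  · set h0 : Fin L → TIdx L l :=
      fun a => Function.update (Function.update f p (g p)) i a with hh0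
    have h0i : ∀ a, h0 a i = a := by intro a; simp [hh0]
    have h0m : ∀ a m, m ≠ i → h0 a m = Function.update f p (g p) m := by
      intro a m hmi; simp [hh0, Function.update_of_ne hmi]
    have h0p : ∀ a, h0 a p = g p := by
      intro a; rw [h0m a p (Ne.symm hip)]; simp
    have h0off : ∀ a m, m ≠ i → m ≠ p → h0 a m = f m := by
      intro a m hmi hmp; rw [h0m a m hmi]; simp [Function.update_of_ne hmp]
    have step : (∑ h : TIdx L l, Qmat B i p f h * Qmat B i q h g)
        = ∑ a : Fin L, Qmat B i p f (h0 a) * Qmat B i q (h0 a) g := by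
      have hside : ∀ h ∈ (Finset.univ : Finset (TIdx L l)),
          Qmat B i p f h * Qmat B i q h g ≠ 0 → h = h0 (h i) := by
        intro h _ hne
        have c1 := qmat_cond (left_ne_zero_of_mul hne)
        have c2 := qmat_cond (right_ne_zero_of_mul hne)
        funext m
        by_cases hmi : m = i
        · rw [hmi, h0i]
        · by_cases hmp : m = p
          · rw [hmp, h0p]
            exact (c2 p (Ne.symm hip) hpq).symm
          · rw [h0off _ m hmi hmp]; exact c1 m hmi hmp
      rw [← Finset.sum_filter_of_ne hside]
      refine Finset.sum_nbij' (fun h => h i) h0 ?_ ?_ ?_ ?_ ?_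
      · intro h _; exact Finset.mem_univ _
      · intro a _
        simp only [Finset.mem_filter, Finset.mem_univ, true_and]
        exact congrArg h0 (h0i a).symm
      · intro h hh
        simp only [Finset.mem_filter, Finset.mem_univ, true_and] at hh
        exact hh.symm
      · intro a _; exact h0i a
      · intro h hh
        simp only [Finset.mem_filter, Finset.mem_univ, true_and] at hh
        exact congrArg (fun t => Qmat B i p f t * Qmat B i q t g) hh
    rw [step]
    have val1 : ∀ a : Fin L,
        Qmat B i p f (h0 a) = B⁻¹ (f p) (f i) * B a (g p) := by
      intro a
      simp only [Qmat]
      rw [if_pos (fun m hmi hmp => h0off a m hmi hmp), h0i, h0p]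
    have val2 : ∀ a : Fin L,
        Qmat B i q (h0 a) g = B⁻¹ (f q) a * B (g i) (g q) := by
      intro a
      have hcond : ∀ m, m ≠ i → m ≠ q → g m = h0 a m := by
        intro m hmi hmq
        by_cases hmp : m = p
        · rw [hmp, h0p]
        · rw [h0off a m hmi hmp]; exact hC m hmi hmp hmq
      simp only [Qmat]
      rw [if_pos hcond, h0off a q (Ne.symm hiq) (Ne.symm hpq), h0i]
    have : ∑ a : Fin L,
        Qmat B i p f (h0 a) * Qmat B i q (h0 a) g
        = (∑ a : Fin L, B⁻¹ (f q) a * B a (g p))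
            * (B⁻¹ (f p) (f i) * B (g i) (g q)) := by
      rw [Finset.sum_mul]
      refine Finset.sum_congr rfl fun a _ => ?_
      rw [val1 a, val2 a]; ring
    rw [this, ← Matrix.mul_apply, hB, Matrix.one_apply]
    simp only [Aaux]
    by_cases hqp : g p = f q
    · rw [if_pos hqp.symm, one_mul, if_pos ⟨hC, hqp⟩]
    · have hcon : ¬((∀ m, m ≠ i → m ≠ p → m ≠ q → g m = f m) ∧ g p = f q) :=
        fun h => hqp h.2
      rw [if_neg fun h => hqp h.symm, zero_mul, if_neg hcon]
  · rw [Finset.sum_eq_zero]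
    · simp only [Aaux]
      rw [eq_comm, if_neg]; intro hcon; exact hC hcon.1
    · intro h _
      by_contra hne
      have c1 := qmat_cond (left_ne_zero_of_mul hne)
      have c2 := qmat_cond (right_ne_zero_of_mul hne)
      push_neg at hC
      obtain ⟨m, hmi, hmp, hmq, hgf⟩ := hC
      exact hgf ((c2 m hmi hmq).trans (c1 m hmi hmp))

lemma qmat_mul_swap1 (B : Matrix (Fin L) (Fin L) ℂ)
    (i j k : Fin l) (hij : i ≠ j) (hik : i ≠ k) (hjk : j ≠ k) :
    Qmat B i k * Pmat j k = Aaux B i k j := by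
  ext f g
  rw [mul_swapMat_apply]
  simp only [Qmat, Aaux, Function.comp_apply]
  rw [Equiv.swap_apply_of_ne_of_ne hij hik, Equiv.swap_apply_right]
  refine if_congr ?_ rfl rfl
  constructor
  · intro hall
    refine ⟨fun m hmi hmk hmj => ?_, ?_⟩
    · have := hall m hmi hmk
      rwa [Equiv.swap_apply_of_ne_of_ne hmj hmk] at this
    · have := hall j (Ne.symm hij) hjk
      rwa [Equiv.swap_apply_left] at this
  · rintro ⟨hoff, hk⟩ m hmi hmk
    by_cases hmj : m = j
    · subst hmj; rwa [Equiv.swap_apply_left]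
    · rw [Equiv.swap_apply_of_ne_of_ne hmj hmk]
      exact hoff m hmi hmk hmj

lemma qmat_mul_swap2 (B : Matrix (Fin L) (Fin L) ℂ)
    (i j k : Fin l) (hij : i ≠ j) (hik : i ≠ k) (hjk : j ≠ k) :
    Qmat B i j * Pmat j k = Aaux B i j k := by
  ext f g
  rw [mul_swapMat_apply]
  simp only [Qmat, Aaux, Function.comp_apply]
  rw [Equiv.swap_apply_of_ne_of_ne hij hik, Equiv.swap_apply_left]
  refine if_congr ?_ rfl rfl
  constructor
  · intro hall
    refine ⟨fun m hmi hmj hmk => ?_, ?_⟩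
    · have := hall m hmi hmj
      rwa [Equiv.swap_apply_of_ne_of_ne hmj hmk] at this
    · have := hall k (Ne.symm hik) (Ne.symm hjk)
      rwa [Equiv.swap_apply_right] at this
  · rintro ⟨hoff, hj⟩ m hmi hmj
    by_cases hmk : m = k
    · subst hmk; rwa [Equiv.swap_apply_right]
    · rw [Equiv.swap_apply_of_ne_of_ne hmj hmk]
      exact hoff m hmi hmj hmk

lemma swap_mul_qmat1 (B : Matrix (Fin L) (Fin L) ℂ)
    (i j k : Fin l) (hij : i ≠ j) (hik : i ≠ k) (hjk : j ≠ k) :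
    Pmat j k * Qmat B i j = Aaux B i k j := by
  ext f g
  rw [swapMat_mul_apply]
  simp only [Qmat, Aaux, Function.comp_apply]
  rw [Equiv.swap_apply_of_ne_of_ne hij hik, Equiv.swap_apply_left]
  refine if_congr ?_ rfl rfl
  constructor
  · intro hall
    refine ⟨fun m hmi hmk hmj => ?_, ?_⟩
    · have := hall m hmi hmj
      rwa [Equiv.swap_apply_of_ne_of_ne hmj hmk] at this
    · have := hall k (Ne.symm hik) (Ne.symm hjk)
      rwa [Equiv.swap_apply_right] at this
  · rintro ⟨hoff, hk⟩ m hmi hmj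
    by_cases hmk : m = k
    · subst hmk; rwa [Equiv.swap_apply_right]
    · rw [Equiv.swap_apply_of_ne_of_ne hmj hmk]
      exact hoff m hmi hmk hmj

lemma swap_mul_qmat2 (B : Matrix (Fin L) (Fin L) ℂ)
    (i j k : Fin l) (hij : i ≠ j) (hik : i ≠ k) (hjk : j ≠ k) :
    Pmat j k * Qmat B i k = Aaux B i j k := by
  ext f g
  rw [swapMat_mul_apply]
  simp only [Qmat, Aaux, Function.comp_apply]
  rw [Equiv.swap_apply_of_ne_of_ne hij hik, Equiv.swap_apply_right]
  refine if_congr ?_ rfl rfl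
  constructor
  · intro hall
    refine ⟨fun m hmi hmj hmk => ?_, ?_⟩
    · have := hall m hmi hmk
      rwa [Equiv.swap_apply_of_ne_of_ne hmj hmk] at this
    · have := hall j (Ne.symm hij) hjk
      rwa [Equiv.swap_apply_left] at this
  · rintro ⟨hoff, hj⟩ m hmi hmk
    by_cases hmj : m = j
    · subst hmj; rwa [Equiv.swap_apply_left]
    · rw [Equiv.swap_apply_of_ne_of_ne hmj hmk]
      exact hoff m hmi hmj hmk

lemma key_braid {R : Type*} [Ring R] [Algebra ℂ R] (Q1 Q2 P A A' : R) (a b c : ℂ)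
    (h12 : Q1 * Q2 = A) (h1P : Q1 * P = A) (hP2 : P * Q2 = A)
    (h21 : Q2 * Q1 = A') (h2P : Q2 * P = A') (hP1 : P * Q1 = A')
    (hPP : P * P = 1) (habc : a * b + b * c = a * c) :
    (1 + a • Q1) * (1 + b • Q2) * (1 - c • P)
      = (1 - c • P) * (1 + b • Q2) * (1 + a • Q1) := by
  have hA'1 : P * A' = Q1 := by rw [← hP1, ← mul_assoc, hPP, one_mul]
  have hA1 : A * P = Q1 := by rw [← h1P, mul_assoc, hPP, mul_one]
  have hAQ1 : A * Q1 = Q1 := by rw [← hP2, mul_assoc, h21, hA'1]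
  simp only [mul_add, add_mul, mul_sub, sub_mul, mul_one, one_mul,
    smul_mul_assoc, mul_smul_comm, smul_smul, smul_add, smul_sub,
    h12, h1P, h2P, hP1, hP2, h21, hA1, hAQ1]
  match_scalars <;>
    first
      | ring1
      | linear_combination habc
      | linear_combination -habc

end Aux8

theorem statement_8 (L l : ℕ) (hL : 1 ≤ L) (hl : 3 ≤ l)
    (B : Matrix (Fin L) (Fin L) ℂ) (hB : IsUnit B.det) (hform : Bᵀ = B ∨ Bᵀ = -B)
    (i j k : Fin l) (hij : i ≠ j) (hik : i ≠ k) (hjk : j ≠ k)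
    (x y z : ℂ) (h1 : x + y ≠ 0) (h2 : x + z ≠ 0) (h3 : y ≠ z) :
    Rtil B i k x z * Rtil B i j x y * Rmat L j k y z
      = Rmat L j k y z * Rtil B i j x y * Rtil B i k x z := by
  have hB' : B⁻¹ * B = 1 := Matrix.nonsing_inv_mul B hB
  have h3' : y - z ≠ 0 := sub_ne_zero.mpr h3
  have habc : (x + z)⁻¹ * (x + y)⁻¹ + (x + y)⁻¹ * (y - z)⁻¹
      = (x + z)⁻¹ * (y - z)⁻¹ := by
    field_simp
    ring
  simp only [Rtil, Rmat]
  exact key_braid (Qmat B i k) (Qmat B i j) (Pmat j k)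
    (Aaux B i k j) (Aaux B i j k) (x + z)⁻¹ (x + y)⁻¹ (y - z)⁻¹
    (qmat_mul_qmat B hB' i k j hik hij (Ne.symm hjk))
    (qmat_mul_swap1 B i j k hij hik hjk)
    (swap_mul_qmat1 B i j k hij hik hjk)
    (qmat_mul_qmat B hB' i j k hij hik hjk)
    (qmat_mul_swap2 B i j k hij hik hjk)
    (swap_mul_qmat2 B i j k hij hik hjk)
    (swapMat_sq j k) habc

end
end
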